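/- arXiv:1603.05018 — 7 statements merged into one kernel-verified Lean document; each statement's English description precedes it below -/
import Mathlib

section
/- Let T be a finite tree, d a positive integer with d ≤ |V(T)|, and T* a subtree of T. Then the sum over all ordered pairs (s,t) with st an edge of T, s ∈ V(T*), t ∉ V(T*), of max(d - |T_{s→t}|, 0) is at most max(d - |V(T*)|, 0). -/
/-!
Orient each edge leaving `T*` as `(s, t)` with `s ∈ T*`. Since `T` is a tree, `T_{s→t}` is the
complement of the branch `T_{t→s}`, and the branches of distinct leaving edges are pairwise
disjoint and miss `T*`, so their sizes `b_{st}` sum to at most `n - |T*|`. The summand for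
`(s, t)` is `max(b_{st} - (n - d), 0)`, and `∑ max(b_i - m, 0) ≤ max(∑ b_i - m, 0)`.
-/

open SimpleGraph Finset

theorem Finset.sum_tsub_const_le {α : Type*} (L : Finset α) (f : α → ℕ) (m : ℕ) :
    ∑ i ∈ L, (f i - m) ≤ (∑ i ∈ L, f i) - m := by
  classical
  induction L using Finset.induction_on with
  | empty => simp
  | insert a L ha ih =>
    rw [sum_insert ha, sum_insert ha]
    omega

namespace SimpleGraph

variable {V : Type*} {G : SimpleGraph V} {s t : V}

/-- `T_{s→t}`: the component of `G - st` containing `s`. -/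
def side (G : SimpleGraph V) (s t : V) : Set V :=
  ((G.deleteEdges {s(s, t)}).connectedComponentMk s).supp

lemma mem_side_iff {v : V} : v ∈ G.side s t ↔ (G.deleteEdges {s(s, t)}).Reachable s v := by
  rw [side, ConnectedComponent.mem_supp_iff, ConnectedComponent.eq, reachable_comm]

lemma Reachable.deleteEdges_of_not_reachable {u v x : V} {e : Sym2 V} (huv : G.Reachable u v)
    (hx : x ∈ e) (hux : ¬ G.Reachable u x) : (G.deleteEdges {e}).Reachable u v := by
  classical
  obtain ⟨w⟩ := huv
  refine ⟨w.toDeleteEdges {e} fun e' he' he'e => ?_⟩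
  rw [Set.mem_singleton_iff] at he'e
  subst he'e
  exact hux ⟨w.takeUntil x (Walk.mem_support_of_mem_edges he' hx)⟩

lemma Preconnected.reachable_deleteEdges_or (hG : G.Preconnected) (h : G.Adj s t) (v : V) :
    (G.deleteEdges {s(s, t)}).Reachable s v ∨ (G.deleteEdges {s(s, t)}).Reachable t v := by
  classical
  obtain ⟨P, hP⟩ := hG.exists_isPath v s
  by_cases he : s(s, t) ∈ P.edges
  · have ht := P.snd_mem_support_of_mem_edges he
    have hs := Walk.endpoint_notMem_support_takeUntil hP ht h.ne
    refine .inr (.symm ⟨(P.takeUntil t ht).toDeleteEdges _ ?_⟩)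
    rintro e he' rfl
    exact hs ((P.takeUntil t ht).fst_mem_support_of_mem_edges he')
  · exact .inl (.symm ⟨P.toDeleteEdges _ fun e he' hee => he (by simp_all)⟩)

lemma IsAcyclic.not_reachable_deleteEdges (hG : G.IsAcyclic) (h : G.Adj s t) :
    ¬ (G.deleteEdges {s(s, t)}).Reachable s t :=
  isBridge_iff.mp (isAcyclic_iff_forall_adj_isBridge.mp hG h)

lemma IsTree.compl_side (hG : G.IsTree) (h : G.Adj s t) : (G.side s t)ᶜ = G.side t s := by
  ext v
  rw [Set.mem_compl_iff, mem_side_iff, mem_side_iff, Sym2.eq_swap (a := t)]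
  constructor
  · exact (hG.connected.preconnected.reachable_deleteEdges_or h v).resolve_left
  · exact fun htv hsv => IsAcyclic.not_reachable_deleteEdges hG.isAcyclic h (hsv.trans htv.symm)

lemma subset_side {A : Set V} (hA : (G.induce A).Preconnected) (hs : s ∈ A) (ht : t ∉ A) :
    A ⊆ G.side s t := by
  intro a ha
  rw [mem_side_iff]
  let f : G.induce A →g G.deleteEdges {s(s, t)} :=
    ⟨Subtype.val, fun {u v} huv => by
      refine (deleteEdges_adj ..).mpr ⟨huv, ?_⟩
      rw [Set.mem_singleton_iff, Sym2.eq_iff]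
      rintro (⟨-, rfl⟩ | ⟨rfl, -⟩)
      · exact ht v.2
      · exact ht u.2⟩
  exact (hA ⟨s, hs⟩ ⟨a, ha⟩).map f

lemma IsTree.disjoint_side {A : Set V} (hG : G.IsTree) (hA : (G.induce A).Preconnected)
    {s' t' : V} (h : G.Adj s t) (h' : G.Adj s' t') (hs : s ∈ A) (ht : t ∉ A) (hs' : s' ∈ A)
    (ht' : t' ∉ A) (hne : s(s, t) ≠ s(s', t')) : Disjoint (G.side t s) (G.side t' s') := by
  rw [← hG.compl_side h', Set.disjoint_compl_right_iff_subset]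
  intro v hv
  rw [mem_side_iff, Sym2.eq_swap] at hv
  have hts' : ¬ (G.deleteEdges {s(s, t)}).Reachable t s' := fun hts' =>
    IsAcyclic.not_reachable_deleteEdges hG.isAcyclic h
      ((mem_side_iff.mp (subset_side hA hs ht hs')).trans hts'.symm)
  -- `s'` lies on the far side of `st`, so walks inside the branch at `t` never use `s't'`.
  have htv : (G.deleteEdges {s(s', t')}).Reachable t v :=
    (hv.deleteEdges_of_not_reachable (Sym2.mem_mk_left s' t') hts').mono
      (deleteEdges_mono (deleteEdges_le _))
  have hst : (G.deleteEdges {s(s', t')}).Adj s t := (deleteEdges_adj ..).mpr ⟨h, hne⟩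
  exact mem_side_iff.mpr
    ((mem_side_iff.mp (subset_side hA hs' ht' hs)).trans (hst.reachable.trans htv))

lemma IsTree.card_side [Fintype V] (hG : G.IsTree) (h : G.Adj s t) :
    Nat.card (G.side s t) = Fintype.card V - (G.side t s).ncard := by
  rw [Nat.card_coe_set_eq, ← hG.compl_side h.symm, Set.ncard_compl, Nat.card_eq_fintype_card]

lemma IsTree.sum_ncard_side_le [Fintype V] (hG : G.IsTree) {A : Finset V}
    (hA : (G.induce (A : Set V)).Preconnected) (L : Finset (V × V))
    (hL : ∀ p ∈ L, G.Adj p.1 p.2 ∧ p.1 ∈ A ∧ p.2 ∉ A) :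
    ∑ p ∈ L, (G.side p.2 p.1).ncard ≤ Fintype.card V - #A := by
  have hdisj : (L : Set (V × V)).PairwiseDisjoint fun p => G.side p.2 p.1 := by
    rintro ⟨s, t⟩ hp ⟨s', t'⟩ hq hpq
    obtain ⟨h, hs, ht⟩ := hL _ hp
    obtain ⟨h', hs', ht'⟩ := hL _ hq
    refine hG.disjoint_side hA h h' hs ht hs' ht' ?_
    rw [Ne, Sym2.eq_iff]
    rintro (⟨rfl, rfl⟩ | ⟨rfl, -⟩)
    · exact hpq rfl
    · exact ht' hs
  have hcover : ⋃ p ∈ L, G.side p.2 p.1 ⊆ (A : Set V)ᶜ := by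
    refine Set.iUnion₂_subset fun p hp => ?_
    obtain ⟨h, hs, ht⟩ := hL p hp
    rw [← hG.compl_side h, Set.compl_subset_compl]
    exact subset_side hA hs ht
  calc ∑ p ∈ L, (G.side p.2 p.1).ncard = (⋃ p ∈ L, G.side p.2 p.1).ncard :=
        ((L.finite_toSet.ncard_biUnion (fun _ _ => Set.toFinite _) hdisj).trans
          (finsum_mem_coe_finset _ _)).symm
    _ ≤ (A : Set V)ᶜ.ncard := Set.ncard_le_ncard hcover
    _ = Fintype.card V - #A := by
        rw [Set.ncard_compl, Nat.card_eq_fintype_card, Set.ncard_coe_finset]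

end SimpleGraph

theorem tree_leaving_edge_sum_upper_bound_general {ι : Type*} [Fintype ι] [DecidableEq ι]
    (T : SimpleGraph ι) [DecidableRel T.Adj] (hT : T.IsTree)
    (d : ℕ) (hdn : d ≤ Fintype.card ι)
    (A : Finset ι) (hA : (T.induce (↑A : Set ι)).Connected) :
    ∑ p ∈ Finset.univ.filter
        (fun p : ι × ι => T.Adj p.1 p.2 ∧ p.1 ∈ A ∧ p.2 ∉ A),
        (d - Nat.card ((T.deleteEdges {s(p.1, p.2)}).connectedComponentMk p.1).supp)
      ≤ d - A.card := by
  set n := Fintype.card ι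
  set L := Finset.univ.filter fun p : ι × ι => T.Adj p.1 p.2 ∧ p.1 ∈ A ∧ p.2 ∉ A
  have hL : ∀ p ∈ L, T.Adj p.1 p.2 ∧ p.1 ∈ A ∧ p.2 ∉ A := fun p hp => (mem_filter.mp hp).2
  change ∑ p ∈ L, (d - Nat.card (T.side p.1 p.2)) ≤ _
  calc ∑ p ∈ L, (d - Nat.card (T.side p.1 p.2))
      = ∑ p ∈ L, ((T.side p.2 p.1).ncard - (n - d)) := by
        refine sum_congr rfl fun p hp => ?_
        have := Set.ncard_le_card (T.side p.2 p.1)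
        rw [Nat.card_eq_fintype_card] at this
        rw [hT.card_side (hL p hp).1]
        omega
    _ ≤ (∑ p ∈ L, (T.side p.2 p.1).ncard) - (n - d) := sum_tsub_const_le L _ _
    _ ≤ (n - #A) - (n - d) := Nat.sub_le_sub_right (hT.sum_ncard_side_le hA.preconnected L hL) _
    _ = d - #A := by
        have := card_le_univ A
        omega

/-- For a finite tree `T`, a positive integer `d ≤ |V(T)|` and a subtree
`T*` of `T` (given by its vertex set `A`, inducing a connected subgraph), the sum over
ordered pairs `(s,t)` with `st ∈ E(T)`, `s ∈ A`, `t ∉ A` of `max(d - |T_{s→t}|, 0)`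
is at most `max(d - |A|, 0)` (truncated natural subtraction). -/
theorem tree_leaving_edge_sum_upper_bound {ι : Type*} [Fintype ι] [DecidableEq ι]
    (T : SimpleGraph ι) [DecidableRel T.Adj] (hT : T.IsTree)
    (d : ℕ) (hd : 0 < d) (hdn : d ≤ Fintype.card ι)
    (A : Finset ι) (hA : (T.induce (↑A : Set ι)).Connected) :
    ∑ p ∈ Finset.univ.filter
        (fun p : ι × ι => T.Adj p.1 p.2 ∧ p.1 ∈ A ∧ p.2 ∉ A),
        (d - Nat.card ((T.deleteEdges {s(p.1, p.2)}).connectedComponentMk p.1).supp)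
      ≤ d - A.card :=
  tree_leaving_edge_sum_upper_bound_general T hT d hdn A hA
end

section
/- Every graph G of treewidth at most k and maximum degree Δ(G) ≥ 2k has chromatic index χ'(G) = Δ(G). -/
open SimpleGraph

open SimpleGraph

/-- `G` has a tree-decomposition of width at most `k`: a tree `T` with bags `B t ⊆ V(G)`
covering all vertices and edges, such that for each vertex `v` the set of tree nodes whose
bag contains `v` induces a connected (nonempty) subgraph of `T`, and every bag has at most
`k + 1` vertices. -/
def HasTreeDecompositionOfWidth {V : Type*} (G : SimpleGraph V) (k : ℕ) : Prop :=
  ∃ (ι : Type) (T : SimpleGraph ι) (B : ι → Finset V),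
    T.IsTree ∧
    (∀ v : V, ∃ t, v ∈ B t) ∧
    (∀ u v : V, G.Adj u v → ∃ t, u ∈ B t ∧ v ∈ B t) ∧
    (∀ v : V, (T.induce {t : ι | v ∈ B t}).Connected) ∧
    (∀ t, (B t).card ≤ k + 1)

/-- The chromatic index of `G`: the least `n` such that the edges of `G` can be properly
coloured with `n` colours, i.e. there is an assignment of colours `< n` to the edges such
that any two distinct edges sharing a vertex get different colours. -/
noncomputable def chromaticIndex {V : Type*} (G : SimpleGraph V) : ℕ :=
  sInf { n : ℕ | ∃ c : Sym2 V → ℕ,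
    (∀ e ∈ G.edgeSet, c e < n) ∧
    (∀ e₁ ∈ G.edgeSet, ∀ e₂ ∈ G.edgeSet,
      e₁ ≠ e₂ → (∃ v : V, v ∈ e₁ ∧ v ∈ e₂) → c e₁ ≠ c e₂) }

/-!
A graph of treewidth at most `k` is `k`-degenerate: root the tree decomposition, give every vertex
the node nearest to the root among those whose bags contain it, and take a vertex whose node is
deepest; all its neighbours lie in that one bag.

Let `E` be a minimal edge set of `G` that is not `Δ`-edge-colourable, where `Δ ≥ 2k`. Applying
degeneracy to the vertices of degree `> k` in `E` gives an edge `xy` of `E` with `d(y) ≤ k` such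
that `x` has at most `k` neighbours of degree `> k`. Vizing's adjacency lemma, however, gives `x`
at least `Δ - d(y) + 1 ≥ k + 1` neighbours of degree `Δ > k`.

The adjacency lemma comes from a maximal multifan at `x` in a `Δ`-colouring of `E - xy`. A colour
missing at two fan vertices, or at a fan vertex and at `x`, would let us colour `xy`, after
shifting colours down the fan and possibly swapping a Kempe chain. So the colours missing at the
fan vertices are pairwise distinct, and by maximality each of them colours a fan edge. Counting
these colours gives the bound.
-/

open Finset SimpleGraph

namespace SimpleGraph

variable {ι : Type*} {T : SimpleGraph ι}

lemma IsAcyclic.length_eq_dist (hT : T.IsAcyclic) {a b : ι} {p : T.Walk a b} (hp : p.IsPath) :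
    p.length = T.dist a b := by
  obtain ⟨q, hq⟩ := p.reachable.exists_walk_length_eq_dist
  have : p = q := congrArg Subtype.val <|
    (hT.subsingleton_path a b).elim ⟨p, hp⟩ ⟨q, q.isPath_of_length_eq_dist hq⟩
  rw [this, hq]

lemma IsAcyclic.dist_lt_of_mem_support (hT : T.IsAcyclic) {a b z : ι} {p : T.Walk a b}
    (hp : p.IsPath) (hz : z ∈ p.support) (hzb : z ≠ b) : T.dist a z < T.dist a b := by
  classical
  rw [← hT.length_eq_dist hp, ← hT.length_eq_dist (hp.takeUntil hz)]
  have hdrop : (p.dropUntil z hz).length ≠ 0 := fun h => hzb (Walk.eq_of_length_eq_zero h)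
  have := congrArg Walk.length (p.take_spec hz)
  rw [Walk.length_append] at this
  omega

lemma IsAcyclic.mem_of_mem_support (hT : T.IsAcyclic) {S : Set ι}
    (hS : (T.induce S).Preconnected) {a b : ι} (ha : a ∈ S) (hb : b ∈ S) {p : T.Walk a b}
    (hp : p.IsPath) {z : ι} (hz : z ∈ p.support) : z ∈ S := by
  classical
  obtain ⟨W⟩ := hS ⟨a, ha⟩ ⟨b, hb⟩
  set q := W.map (Embedding.induce S).toHom
  have : p = q.bypass := congrArg Subtype.val <|
    (hT.subsingleton_path a b).elim ⟨p, hp⟩ ⟨q.bypass, q.bypass_isPath⟩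
  have hzq : z ∈ q.support := q.support_bypass_subset_support (this ▸ hz)
  rw [Walk.support_map, List.mem_map] at hzq
  obtain ⟨z', -, rfl⟩ := hzq
  exact z'.2

lemma IsAcyclic.mem_support_of_forall_dist_le (hT : T.IsAcyclic) {S : Set ι}
    (hS : (T.induce S).Preconnected) {r m t : ι} (hm : m ∈ S) (ht : t ∈ S)
    (hmin : ∀ u ∈ S, T.dist r m ≤ T.dist r u) {p : T.Walk r t} (hp : p.IsPath) :
    m ∈ p.support := by
  classical
  obtain ⟨W⟩ := hS ⟨m, hm⟩ ⟨t, ht⟩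
  suffices ∀ {a b : S} (W : (T.induce S).Walk a b),
      (∀ p : T.Walk r a, p.IsPath → m ∈ p.support) → ∀ p : T.Walk r b, p.IsPath → m ∈ p.support
    from this W (fun p _ => p.end_mem_support) p hp
  intro a b W
  induction W with
  | nil => exact id
  | @cons a a' b hadj W ih =>
    refine fun ha => ih fun p' hp' => ?_
    by_cases haa : a.1 ∈ p'.support
    · exact p'.support_takeUntil_subset_support haa (ha _ (hp'.takeUntil haa))
    -- Otherwise `p'` followed by the edge `a' a` is the path to `a`; it passes through `m`,
    -- and `m = a` would put `a' ∈ S` closer to `r` than `m`.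
    · have hadj' : T.Adj a' a := hadj.symm
      have hpath := hp'.concat haa hadj'
      have hm' := ha _ hpath
      rw [Walk.support_concat, List.mem_append, List.mem_singleton] at hm'
      refine hm'.resolve_right fun hma => ?_
      have h1 := hT.length_eq_dist hpath
      have h2 := hT.length_eq_dist hp'
      have h3 := hmin a' a'.2
      rw [Walk.length_concat, ← hma] at h1
      omega

lemma IsAcyclic.mem_of_forall_dist_le (hT : T.IsAcyclic) {S S' : Set ι}
    (hS : (T.induce S).Preconnected) (hS' : (T.induce S').Preconnected) {r m m' t : ι}
    (hm : m ∈ S) (hm' : m' ∈ S') (hmin : ∀ u ∈ S, T.dist r m ≤ T.dist r u)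
    (hmin' : ∀ u ∈ S', T.dist r m' ≤ T.dist r u) (hle : T.dist r m ≤ T.dist r m')
    (ht : t ∈ S) (ht' : t ∈ S') (hrt : T.Reachable r t) : m' ∈ S := by
  classical
  obtain ⟨p, hp⟩ := hrt.exists_isPath
  have hmp := hT.mem_support_of_forall_dist_le hS hm ht hmin hp
  have hm'p := hT.mem_support_of_forall_dist_le hS' hm' ht' hmin' hp
  rw [← p.take_spec hmp, Walk.mem_support_append_iff] at hm'p
  rcases hm'p with hm'p | hm'p
  · by_contra hm'S
    have := hT.dist_lt_of_mem_support (hp.takeUntil hmp) hm'p (by rintro rfl; exact hm'S hm)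
    omega
  · exact hT.mem_of_mem_support hS hm ht (hp.dropUntil hmp) hm'p

variable {V : Type*} {G : SimpleGraph V}

def IsDegenerate (G : SimpleGraph V) [DecidableRel G.Adj] (k : ℕ) : Prop :=
  ∀ S : Finset V, S.Nonempty → ∃ v ∈ S, #{u ∈ S | G.Adj v u} ≤ k

lemma Connected.card_filter_degree_le_one_le_two [Fintype V] [DecidableRel G.Adj]
    (hG : G.Connected) (hdeg : ∀ v, G.degree v ≤ 2) : #{v | G.degree v ≤ 1} ≤ 2 := by
  have hedges := hG.card_vert_le_card_edgeSet_add_one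
  rw [Nat.card_eq_fintype_card, Nat.card_eq_fintype_card, ← edgeFinset_card] at hedges
  have hsum : ∑ v, G.degree v + #{v | G.degree v ≤ 1} ≤ 2 * Fintype.card V := by
    rw [card_filter, ← sum_add_distrib, mul_comm, ← smul_eq_mul, ← card_univ, ← sum_const]
    exact sum_le_sum fun v _ => by have := hdeg v; split_ifs <;> omega
  have := G.sum_degrees_eq_twice_card_edges
  omega

lemma not_reachable_of_degree_le_one [Fintype V] [DecidableRel G.Adj]
    (hdeg : ∀ v, G.degree v ≤ 2) {a b c : V} (hab : a ≠ b) (hac : a ≠ c) (hbc : b ≠ c)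
    (ha : G.degree a ≤ 1) (hb : G.degree b ≤ 1) (hc : G.degree c ≤ 1) (hrb : G.Reachable a b) :
    ¬G.Reachable a c := by
  classical
  intro hrc
  set C := G.connectedComponentMk a
  have hdegC : ∀ v : C.supp, (G.induce C.supp).degree v = G.degree v := fun v =>
    degree_induce_of_neighborSet_subset fun w hw =>
      (ConnectedComponent.mem_supp_iff _ _).2 <|
        (ConnectedComponent.eq.2 (G.adj_symm hw).reachable).trans v.2
  have hmem : ∀ v, G.Reachable a v → v ∈ C.supp := fun v hv =>
    (ConnectedComponent.mem_supp_iff _ _).2 (ConnectedComponent.eq.2 hv.symm)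
  have h3 : ({⟨a, hmem a .rfl⟩, ⟨b, hmem b hrb⟩, ⟨c, hmem c hrc⟩} : Finset C.supp) ⊆
      univ.filter fun v => (G.induce C.supp).degree v ≤ 1 := by
    intro v hv
    simp only [mem_insert, mem_singleton] at hv
    rcases hv with rfl | rfl | rfl <;> simp [hdegC, ha, hb, hc]
  have := card_le_card h3
  rw [card_insert_of_notMem (by simp [hab, hac]), card_insert_of_notMem (by simp [hbc]),
    card_singleton] at this
  have hC : (G.induce C.supp).Connected := C.connected_toSimpleGraph
  have := hC.card_filter_degree_le_one_le_two fun v => hdegC v ▸ hdeg v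
  omega

end SimpleGraph

theorem HasTreeDecompositionOfWidth.isDegenerate {V : Type*} {G : SimpleGraph V}
    [DecidableRel G.Adj] {k : ℕ} (h : HasTreeDecompositionOfWidth G k) : G.IsDegenerate k := by
  classical
  obtain ⟨ι, T, B, hT, hcover, hedge, hconn, hcard⟩ := h
  obtain ⟨r⟩ := hT.connected.nonempty
  let top v := Function.argminOn (T.dist r) {t | v ∈ B t} (hcover v)
  have htop : ∀ v, v ∈ B (top v) := fun v =>
    Function.argminOn_mem (f := T.dist r) {t | v ∈ B t} (hcover v)
  have hmin : ∀ v t, v ∈ B t → T.dist r (top v) ≤ T.dist r t :=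
    fun v t ht => not_lt.1 (Function.not_lt_argminOn (T.dist r) {t | v ∈ B t} ht)
  have hmem : ∀ u v, G.Adj u v → T.dist r (top u) ≤ T.dist r (top v) → u ∈ B (top v) := by
    intro u v huv hle
    obtain ⟨t, hut, hvt⟩ := hedge u v huv
    exact hT.isAcyclic.mem_of_forall_dist_le (hconn u).preconnected (hconn v).preconnected
      (htop u) (htop v) (hmin u) (hmin v) hle hut hvt (hT.connected r t)
  intro S hS
  obtain ⟨v, hvS, hvmax⟩ := S.exists_max_image (fun v => T.dist r (top v)) hS
  refine ⟨v, hvS, ?_⟩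
  calc #{u ∈ S | G.Adj v u} ≤ #((B (top v)).erase v) := card_le_card fun u hu => by
        obtain ⟨huS, hvu⟩ := mem_filter.1 hu
        exact mem_erase.2 ⟨hvu.ne', hmem u v hvu.symm (hvmax u huS)⟩
    _ ≤ k := by
      rw [card_erase_of_mem (htop v)]
      have := hcard (top v)
      omega

section EdgeColoring

variable {V : Type*}

structure IsProperEdgeColoring (E : Finset (Sym2 V)) (n : ℕ) (c : Sym2 V → ℕ) : Prop where
  lt : ∀ e ∈ E, c e < n
  ne : ∀ e₁ ∈ E, ∀ e₂ ∈ E, e₁ ≠ e₂ → ∀ v ∈ e₁, v ∈ e₂ → c e₁ ≠ c e₂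

variable {E F : Finset (Sym2 V)} {n : ℕ} {c c' : Sym2 V → ℕ} {v : V} {γ : ℕ}

def EdgeColorable (E : Finset (Sym2 V)) (n : ℕ) : Prop :=
  ∃ c, IsProperEdgeColoring E n c

def IsMissingAt (E : Finset (Sym2 V)) (c : Sym2 V → ℕ) (v : V) (γ : ℕ) : Prop :=
  ∀ e ∈ E, v ∈ e → c e ≠ γ

lemma isMissingAt_congr (h : ∀ e ∈ E, v ∈ e → c' e = c e) :
    IsMissingAt E c' v γ ↔ IsMissingAt E c v γ :=
  forall₂_congr fun e he => imp_congr_right fun hv => by rw [h e he hv]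

variable [DecidableEq V]

instance (E : Finset (Sym2 V)) (c : Sym2 V → ℕ) (v : V) (γ : ℕ) :
    Decidable (IsMissingAt E c v γ) :=
  inferInstanceAs (Decidable (∀ e ∈ E, v ∈ e → c e ≠ γ))

def edgeDegree (E : Finset (Sym2 V)) (v : V) : ℕ := #{e ∈ E | v ∈ e}

def missingColors (E : Finset (Sym2 V)) (c : Sym2 V → ℕ) (n : ℕ) (v : V) : Finset ℕ :=
  {γ ∈ range n | IsMissingAt E c v γ}

lemma edgeDegree_mono (h : E ⊆ F) (v : V) : edgeDegree E v ≤ edgeDegree F v :=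
  card_le_card (filter_subset_filter _ h)

lemma edgeDegree_le_card_filter [Fintype V] (E : Finset (Sym2 V)) (v : V) :
    edgeDegree E v ≤ #{w | s(v, w) ∈ E} := by
  calc edgeDegree E v ≤ #(({w | s(v, w) ∈ E} : Finset V).image fun w => s(v, w)) :=
        card_le_card fun e he => by
          obtain ⟨he, hve⟩ := mem_filter.1 he
          obtain ⟨w, rfl⟩ := Sym2.mem_iff_exists.1 hve
          exact mem_image.2 ⟨w, mem_filter.2 ⟨mem_univ _, he⟩, rfl⟩
    _ ≤ #{w | s(v, w) ∈ E} := card_image_le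

lemma edgeDegree_erase_add_one {e : Sym2 V} (he : e ∈ F) (hv : v ∈ e) :
    edgeDegree (F.erase e) v + 1 = edgeDegree F v := by
  rw [edgeDegree, edgeDegree, filter_erase, card_erase_add_one (mem_filter.2 ⟨he, hv⟩)]

lemma IsProperEdgeColoring.edgeDegree_le (hc : IsProperEdgeColoring E n c) (v : V) :
    edgeDegree E v ≤ n := by
  have hinj : Set.InjOn c ({e ∈ E | v ∈ e} : Finset (Sym2 V)) := fun e₁ h₁ e₂ h₂ heq => by
    by_contra hne
    exact hc.ne e₁ (mem_filter.1 h₁).1 e₂ (mem_filter.1 h₂).1 hne v (mem_filter.1 h₁).2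
      (mem_filter.1 h₂).2 heq
  calc edgeDegree E v = #({e ∈ E | v ∈ e}.image c) := (card_image_of_injOn hinj).symm
    _ ≤ #(range n) := card_le_card fun γ hγ => by
      obtain ⟨e, he, rfl⟩ := mem_image.1 hγ
      exact mem_range.2 (hc.lt e (mem_filter.1 he).1)
    _ = n := card_range n

lemma le_card_missingColors_add_edgeDegree (E : Finset (Sym2 V)) (c : Sym2 V → ℕ) (n : ℕ) (v : V) :
    n ≤ #(missingColors E c n v) + edgeDegree E v := by
  calc n = #(range n) := (card_range n).symm
    _ ≤ #(missingColors E c n v ∪ {e ∈ E | v ∈ e}.image c) := card_le_card fun γ hγ => by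
      by_cases hm : IsMissingAt E c v γ
      · exact mem_union_left _ (mem_filter.2 ⟨hγ, hm⟩)
      · simp only [IsMissingAt, not_forall, not_not] at hm
        obtain ⟨e, he, hv, rfl⟩ := hm
        exact mem_union_right _ (mem_image_of_mem c (mem_filter.2 ⟨he, hv⟩))
    _ ≤ #(missingColors E c n v) + #({e ∈ E | v ∈ e}.image c) := card_union_le _ _
    _ ≤ #(missingColors E c n v) + edgeDegree E v := Nat.add_le_add_left card_image_le _

lemma IsProperEdgeColoring.update (hc : IsProperEdgeColoring E n c) (hγ : γ < n) {a b : V}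
    (ha : IsMissingAt E c a γ) (hb : IsMissingAt E c b γ) :
    IsProperEdgeColoring (insert s(a, b) E) n (Function.update c s(a, b) γ) := by
  have hfree : ∀ e ∈ insert s(a, b) E, e ≠ s(a, b) → ∀ v ∈ s(a, b), v ∈ e → c e ≠ γ := by
    intro e he hne v hv hve
    have he' : e ∈ E := (mem_insert.1 he).resolve_left hne
    rcases Sym2.mem_iff.1 hv with rfl | rfl
    exacts [ha e he' hve, hb e he' hve]
  refine ⟨fun e he => ?_, fun e₁ h₁ e₂ h₂ hne v hv₁ hv₂ => ?_⟩
  · rcases eq_or_ne e s(a, b) with rfl | hne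
    · simpa using hγ
    · rw [Function.update_of_ne hne]
      exact hc.lt e ((mem_insert.1 he).resolve_left hne)
  · rcases eq_or_ne e₁ s(a, b) with rfl | hne₁ <;> rcases eq_or_ne e₂ s(a, b) with rfl | hne₂
    · exact absurd rfl hne
    · simpa [Function.update_of_ne hne₂] using (hfree e₂ h₂ hne₂ v hv₁ hv₂).symm
    · simpa [Function.update_of_ne hne₁] using hfree e₁ h₁ hne₁ v hv₂ hv₁
    · rw [Function.update_of_ne hne₁, Function.update_of_ne hne₂]
      exact hc.ne e₁ ((mem_insert.1 h₁).resolve_left hne₁) e₂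
        ((mem_insert.1 h₂).resolve_left hne₂) hne v hv₁ hv₂

lemma IsProperEdgeColoring.isMissingAt_update (hc : IsProperEdgeColoring E n c) {e : Sym2 V}
    (he : e ∈ E) (hv : v ∈ e) (hγ : γ ≠ c e) : IsMissingAt E (Function.update c e γ) v (c e) := by
  intro e' he' hv'
  rcases eq_or_ne e' e with rfl | hne
  · simpa using hγ
  · rw [Function.update_of_ne hne]
    exact hc.ne e' he' e he hne v hv' hv

end EdgeColoring

section Kempe

variable {V : Type*} {E : Finset (Sym2 V)} {n : ℕ} {c : Sym2 V → ℕ}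
  {α β γ : ℕ} {r v w : V} {e : Sym2 V}

def kempeGraph (E : Finset (Sym2 V)) (c : Sym2 V → ℕ) (α β : ℕ) : SimpleGraph V :=
  fromEdgeSet {e | e ∈ E ∧ (c e = α ∨ c e = β)}

noncomputable def kempeSwap (E : Finset (Sym2 V)) (c : Sym2 V → ℕ) (α β : ℕ) (r : V) :
    Sym2 V → ℕ :=
  open Classical in
  fun e => if ∃ v ∈ e, (kempeGraph E c α β).Reachable r v then Equiv.swap α β (c e) else c e

lemma kempeGraph_reachable_of_mem (he : e ∈ E) (hce : c e = α ∨ c e = β) (hv : v ∈ e)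
    (hw : w ∈ e) : (kempeGraph E c α β).Reachable v w := by
  rcases eq_or_ne v w with rfl | hvw
  · rfl
  · refine Adj.reachable ((fromEdgeSet_adj _).2 ⟨?_, hvw⟩)
    rw [← (Sym2.mem_and_mem_iff hvw).1 ⟨hv, hw⟩]
    exact ⟨he, hce⟩

lemma kempeSwap_of_reachable (hv : v ∈ e) (hr : (kempeGraph E c α β).Reachable r v) :
    kempeSwap E c α β r e = Equiv.swap α β (c e) :=
  if_pos ⟨v, hv, hr⟩

lemma kempeSwap_of_not_reachable (he : e ∈ E) (hv : v ∈ e)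
    (hr : ¬(kempeGraph E c α β).Reachable r v) : kempeSwap E c α β r e = c e := by
  unfold kempeSwap
  split_ifs with h
  · obtain ⟨w, hw, hrw⟩ := h
    have hce : ¬(c e = α ∨ c e = β) := fun hce =>
      hr (hrw.trans (kempeGraph_reachable_of_mem he hce hw hv))
    exact Equiv.swap_apply_of_ne_of_ne (not_or.1 hce).1 (not_or.1 hce).2
  · rfl

lemma IsProperEdgeColoring.kempeSwap (hc : IsProperEdgeColoring E n c) (hα : α < n)
    (hβ : β < n) (r : V) : IsProperEdgeColoring E n (kempeSwap E c α β r) := by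
  refine ⟨fun e he => ?_, fun e₁ h₁ e₂ h₂ hne v hv₁ hv₂ => ?_⟩
  · unfold _root_.kempeSwap
    split_ifs
    · rw [Equiv.swap_apply_def]
      split_ifs
      exacts [hβ, hα, hc.lt e he]
    · exact hc.lt e he
  · by_cases hr : (kempeGraph E c α β).Reachable r v
    · rw [kempeSwap_of_reachable hv₁ hr, kempeSwap_of_reachable hv₂ hr]
      exact (Equiv.injective _).ne (hc.ne e₁ h₁ e₂ h₂ hne v hv₁ hv₂)
    · rw [kempeSwap_of_not_reachable h₁ hv₁ hr, kempeSwap_of_not_reachable h₂ hv₂ hr]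
      exact hc.ne e₁ h₁ e₂ h₂ hne v hv₁ hv₂

lemma isMissingAt_kempeSwap_of_reachable (hr : (kempeGraph E c α β).Reachable r v) :
    IsMissingAt E (kempeSwap E c α β r) v γ ↔ IsMissingAt E c v (Equiv.swap α β γ) :=
  forall₂_congr fun e _ => imp_congr_right fun hv => by
    rw [kempeSwap_of_reachable hv hr, Ne, Ne, Equiv.swap_apply_eq_iff]

lemma isMissingAt_kempeSwap_of_not_reachable (hr : ¬(kempeGraph E c α β).Reachable r v) :
    IsMissingAt E (kempeSwap E c α β r) v γ ↔ IsMissingAt E c v γ :=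
  isMissingAt_congr fun _ he hv => kempeSwap_of_not_reachable he hv hr

lemma IsProperEdgeColoring.degree_kempeGraph_le [DecidableEq V]
    (hc : IsProperEdgeColoring E n c) (v : V) [Fintype ((kempeGraph E c α β).neighborSet v)] :
    (kempeGraph E c α β).degree v ≤ #{γ ∈ {α, β} | ¬IsMissingAt E c v γ} := by
  have hadj : ∀ w, (kempeGraph E c α β).Adj v w → s(v, w) ∈ E ∧ (c s(v, w) = α ∨ c s(v, w) = β) :=
    fun w h => ((fromEdgeSet_adj _).1 h).1
  rw [← card_neighborFinset_eq_degree]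
  refine card_le_card_of_injOn (fun w => c s(v, w)) (fun w hw => ?_) (fun w₁ hw₁ w₂ hw₂ heq => ?_)
  · have hw := hadj w ((mem_neighborFinset _ _ _).1 hw)
    refine mem_filter.2 ⟨?_, fun hm => hm _ hw.1 (Sym2.mem_mk_left _ _) rfl⟩
    rcases hw.2 with h | h <;> simp [h]
  · by_contra hne
    have h₁ := hadj w₁ ((mem_neighborFinset _ _ _).1 hw₁)
    have h₂ := hadj w₂ ((mem_neighborFinset _ _ _).1 hw₂)
    exact hc.ne _ h₁.1 _ h₂.1 (fun h => hne (Sym2.congr_right.1 h)) v (Sym2.mem_mk_left _ _)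
      (Sym2.mem_mk_left _ _) heq

lemma IsProperEdgeColoring.degree_kempeGraph_le_two [DecidableEq V]
    (hc : IsProperEdgeColoring E n c) (v : V) [Fintype ((kempeGraph E c α β).neighborSet v)] :
    (kempeGraph E c α β).degree v ≤ 2 :=
  (hc.degree_kempeGraph_le v).trans ((card_filter_le _ _).trans card_le_two)

lemma IsProperEdgeColoring.degree_kempeGraph_le_one [DecidableEq V]
    (hc : IsProperEdgeColoring E n c) [Fintype ((kempeGraph E c α β).neighborSet v)]
    (hm : IsMissingAt E c v α ∨ IsMissingAt E c v β) : (kempeGraph E c α β).degree v ≤ 1 := by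
  refine (hc.degree_kempeGraph_le v).trans (card_le_one.2 fun a ha b hb => ?_)
  simp only [mem_filter, mem_insert, mem_singleton] at ha hb
  rcases ha with ⟨rfl | rfl, ha⟩ <;> rcases hb with ⟨rfl | rfl, hb⟩ <;> tauto

end Kempe

section Multifan

variable {V : Type*} {E : Finset (Sym2 V)} {n : ℕ} {c c' : Sym2 V → ℕ}
  {x z : V} {ys : ℕ → V} {s t : ℕ} {γ δ : ℕ}

/-- A multifan at `x` with vertices `ys 0, …, ys s`: the edge `x (ys 0)` is the one left
uncoloured, and the colour of each later edge `x (ys t)` is missing at an earlier `ys j`. -/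
structure IsMultifan (E : Finset (Sym2 V)) (c : Sym2 V → ℕ) (x : V) (ys : ℕ → V) (s : ℕ) :
    Prop where
  ne_center : ∀ i ≤ s, ys i ≠ x
  injOn : Set.InjOn ys (Set.Iic s)
  edge_mem : ∀ t ∈ Set.Icc 1 s, s(x, ys t) ∈ E
  isMissingAt : ∀ t ∈ Set.Icc 1 s, ∃ j < t, IsMissingAt E c (ys j) (c s(x, ys t))

namespace IsMultifan

lemma zero (h : ys 0 ≠ x) : IsMultifan E c x ys 0 where
  ne_center i hi := by rwa [Nat.le_zero.1 hi]
  injOn i hi j hj _ := by rw [Set.mem_Iic, Nat.le_zero] at hi hj; rw [hi, hj]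
  edge_mem t ht := absurd (ht.1.trans ht.2) (by omega)
  isMissingAt t ht := absurd (ht.1.trans ht.2) (by omega)

lemma mono (hfan : IsMultifan E c x ys s) (hts : t ≤ s) : IsMultifan E c x ys t where
  ne_center i hi := hfan.ne_center i (hi.trans hts)
  injOn := hfan.injOn.mono (Set.Iic_subset_Iic.2 hts)
  edge_mem i hi := hfan.edge_mem i ⟨hi.1, hi.2.trans hts⟩
  isMissingAt i hi := hfan.isMissingAt i ⟨hi.1, hi.2.trans hts⟩

lemma notMem_edge (hfan : IsMultifan E c x ys s) {i : ℕ} (hi : i ≤ s) (ht : t ≤ s)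
    (hit : i ≠ t) : ys i ∉ s(x, ys t) := by
  rw [Sym2.mem_iff, not_or]
  exact ⟨hfan.ne_center i hi, fun h => hit (hfan.injOn hi ht h)⟩

lemma congr (hfan : IsMultifan E c x ys s) (h : ∀ e ∈ E, ∀ i ≤ s, ys i ∈ e → c' e = c e) :
    IsMultifan E c' x ys s :=
  { hfan with
    isMissingAt := fun t ht => by
      obtain ⟨j, hjt, hj⟩ := hfan.isMissingAt t ht
      refine ⟨j, hjt, ?_⟩
      rw [h _ (hfan.edge_mem t ht) t ht.2 (Sym2.mem_mk_right _ _),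
        isMissingAt_congr fun e he hj' => h e he j (hjt.le.trans ht.2) hj']
      exact hj }

lemma extend (hfan : IsMultifan E c x ys s) (hzx : z ≠ x) (hz : ∀ i ≤ s, ys i ≠ z)
    (he : s(x, z) ∈ E) (ht : t ≤ s) (hm : IsMissingAt E c (ys t) (c s(x, z))) :
    IsMultifan E c x (Function.update ys (s + 1) z) (s + 1) := by
  set ys' := Function.update ys (s + 1) z
  have hys : ∀ i ≤ s, ys' i = ys i := fun i hi => Function.update_of_ne (by omega) _ _
  have hlast : ys' (s + 1) = z := Function.update_self _ _ _
  have hcases : ∀ i ≤ s + 1, i ≤ s ∨ i = s + 1 := fun i hi => by omega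
  refine ⟨fun i hi => ?_, fun i hi j hj hij => ?_, fun i hi => ?_, fun i hi => ?_⟩
  · rcases hcases i hi with hi | rfl
    · rw [hys i hi]; exact hfan.ne_center i hi
    · rwa [hlast]
  · rcases hcases i hi with hi | rfl <;> rcases hcases j hj with hj | rfl
    · rw [hys i hi, hys j hj] at hij; exact hfan.injOn hi hj hij
    · rw [hys i hi, hlast] at hij; exact absurd hij (hz i hi)
    · rw [hys j hj, hlast] at hij; exact absurd hij.symm (hz j hj)
    · rfl
  · rcases hcases i hi.2 with hi' | rfl
    · rw [hys i hi']; exact hfan.edge_mem i ⟨hi.1, hi'⟩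
    · rwa [hlast]
  · rcases hcases i hi.2 with hi' | rfl
    · obtain ⟨j, hji, hj⟩ := hfan.isMissingAt i ⟨hi.1, hi'⟩
      exact ⟨j, hji, by rwa [hys i hi', hys j (hji.le.trans hi')]⟩
    · exact ⟨t, Nat.lt_succ_of_le ht, by rwa [hlast, hys t ht]⟩

lemma lt_card [Fintype V] (hfan : IsMultifan E c x ys s) : s < Fintype.card V := by
  have := card_le_card_of_injOn ys (fun i _ => mem_univ _)
    (fun i hi j hj h => hfan.injOn (mem_range_succ_iff.1 hi) (mem_range_succ_iff.1 hj) h)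
  rw [card_range, card_univ] at this
  omega

lemma exists_maximal [Fintype V] (E : Finset (Sym2 V)) (c : Sym2 V → ℕ) {y : V} (hyx : y ≠ x) :
    ∃ ys s, ys 0 = y ∧ IsMultifan E c x ys s ∧
      ∀ ys', ys' 0 = y → ¬IsMultifan E c x ys' (s + 1) := by
  classical
  let P s := ∃ ys, ys 0 = y ∧ IsMultifan E c x ys s
  have h0 : P 0 := ⟨fun _ => y, rfl, zero hyx⟩
  obtain ⟨ys, hys, hfan⟩ := Nat.findGreatest_spec (Nat.zero_le (Fintype.card V)) h0
  refine ⟨ys, _, hys, hfan, fun ys' hys' hfan' => ?_⟩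
  exact Nat.findGreatest_is_greatest (Nat.lt_succ_self _) hfan'.lt_card.le ⟨ys', hys', hfan'⟩

variable [DecidableEq V]

theorem edgeColorable_of_isMissingAt (hc : IsProperEdgeColoring E n c)
    (hfan : IsMultifan E c x ys s) (hγ : γ < n) (hx : IsMissingAt E c x γ)
    (hy : IsMissingAt E c (ys s) γ) : EdgeColorable (insert s(x, ys 0) E) n := by
  induction s using Nat.strong_induction_on generalizing c γ with
  | _ s ih =>
  rcases Nat.eq_zero_or_pos s with rfl | hs
  · exact ⟨_, hc.update hγ hx hy⟩
  -- Recolour `x (ys s)` with `γ`; its old colour is then missing at `x` and at some `ys j`.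
  obtain ⟨j, hjs, hj⟩ := hfan.isMissingAt s ⟨hs, le_rfl⟩
  set e := s(x, ys s)
  have he : e ∈ E := hfan.edge_mem s ⟨hs, le_rfl⟩
  have hγe : γ ≠ c e := (hx e he (Sym2.mem_mk_left _ _)).symm
  have hc' : IsProperEdgeColoring E n (Function.update c e γ) := by
    have := hc.update hγ hx hy
    rwa [insert_eq_of_mem he] at this
  have hagree : ∀ e' ∈ E, ∀ i ≤ j, ys i ∈ e' → Function.update c e γ e' = c e' :=
    fun e' _ i hi hie' => Function.update_of_ne
      (by rintro rfl; exact hfan.notMem_edge (hi.trans hjs.le) le_rfl (by omega) hie') _ _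
  refine ih j hjs hc' ((hfan.mono hjs.le).congr hagree) (hc.lt e he)
    (hc.isMissingAt_update he (Sym2.mem_mk_left _ _) hγe) ?_
  exact (isMissingAt_congr fun e' he' hje' => hagree e' he' j le_rfl hje').2 hj

lemma exists_isMultifan_of_not (hfan : IsMultifan E c x ys s)
    (hedge : ∀ t ∈ Set.Icc 1 s, c' s(x, ys t) = c s(x, ys t))
    (hnot : ¬IsMultifan E c' x ys s) :
    ∃ t ∈ Set.Icc 1 s, ∃ j < t, IsMultifan E c' x ys j ∧
      IsMissingAt E c (ys j) (c s(x, ys t)) ∧ ¬IsMissingAt E c' (ys j) (c s(x, ys t)) := by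
  let P t := t ∈ Set.Icc 1 s ∧ ∀ j < t, ¬IsMissingAt E c' (ys j) (c s(x, ys t))
  have hnotP : ∀ t ∈ Set.Icc 1 s, ¬P t → ∃ j < t, IsMissingAt E c' (ys j) (c' s(x, ys t)) := by
    intro t ht hPt
    simp only [P, not_and, not_forall, not_not] at hPt
    obtain ⟨j, hjt, hj⟩ := hPt ht
    exact ⟨j, hjt, hedge t ht ▸ hj⟩
  have hP : ∃ t, P t := by
    by_contra h
    exact hnot { hfan with isMissingAt := fun t ht => hnotP t ht fun hPt => h ⟨t, hPt⟩ }
  obtain ⟨ht, hnm⟩ := Nat.find_spec hP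
  obtain ⟨j, hjt, hj⟩ := hfan.isMissingAt _ ht
  have hjs := hjt.le.trans ht.2
  refine ⟨_, ht, j, hjt, { hfan.mono hjs with isMissingAt := fun t' ht' => ?_ }, hj, hnm j hjt⟩
  exact hnotP t' ⟨ht'.1, ht'.2.trans hjs⟩ (Nat.find_min hP (ht'.2.trans_lt hjt))

theorem edgeColorable_of_not_reachable (hc : IsProperEdgeColoring E n c)
    (hfan : IsMultifan E c x ys s) (hγ : γ < n) (hδ : δ < n) (hx : IsMissingAt E c x δ)
    (hy : IsMissingAt E c (ys s) γ) (hr : ¬(kempeGraph E c γ δ).Reachable (ys s) x) :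
    EdgeColorable (insert s(x, ys 0) E) n := by
  set c' := kempeSwap E c γ δ (ys s)
  have hc' : IsProperEdgeColoring E n c' := hc.kempeSwap hγ hδ (ys s)
  have hx' : IsMissingAt E c' x δ := (isMissingAt_kempeSwap_of_not_reachable hr).2 hx
  by_cases hfan' : IsMultifan E c' x ys s
  · refine hfan'.edgeColorable_of_isMissingAt hc' hδ hx'
      ((isMissingAt_kempeSwap_of_reachable .rfl).2 ?_)
    rwa [Equiv.swap_apply_right]
  obtain ⟨t, ht, j, hjt, hfanj, hm, hnm⟩ := hfan.exists_isMultifan_of_not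
    (fun t ht => kempeSwap_of_not_reachable (hfan.edge_mem t ht) (Sym2.mem_mk_left _ _) hr) hfan'
  -- The swap can only have destroyed a missing colour at `ys j` by turning a `γ` into a `δ`.
  have hreach : (kempeGraph E c γ δ).Reachable (ys s) (ys j) := by
    by_contra h
    exact hnm ((isMissingAt_kempeSwap_of_not_reachable h).2 hm)
  have hδ' : c s(x, ys t) ≠ δ := hx _ (hfan.edge_mem t ht) (Sym2.mem_mk_left _ _)
  have hγ' : c s(x, ys t) = γ := by
    by_contra h
    exact hnm ((isMissingAt_kempeSwap_of_reachable hreach).2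
      (by rwa [Equiv.swap_apply_of_ne_of_ne h hδ']))
  refine hfanj.edgeColorable_of_isMissingAt hc' hδ hx'
    ((isMissingAt_kempeSwap_of_reachable hreach).2 ?_)
  rw [Equiv.swap_apply_right]
  exact hγ' ▸ hm

theorem edgeColorable_of_isMissingAt_of_isMissingAt [Fintype V]
    (hc : IsProperEdgeColoring E n c) (hfan : IsMultifan E c x ys s) {i j : ℕ} (hi : i ≤ s)
    (hj : j ≤ s) (hij : i ≠ j) (hγ : γ < n) (hyi : IsMissingAt E c (ys i) γ)
    (hyj : IsMissingAt E c (ys j) γ) (hδ : δ < n) (hx : IsMissingAt E c x δ) :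
    EdgeColorable (insert s(x, ys 0) E) n := by
  classical
  have hnot := not_reachable_of_degree_le_one
    (fun v => hc.degree_kempeGraph_le_two (α := γ) (β := δ) v)
    (hfan.ne_center i hi).symm (hfan.ne_center j hj).symm (fun h => hij (hfan.injOn hi hj h))
    (hc.degree_kempeGraph_le_one (.inr hx)) (hc.degree_kempeGraph_le_one (.inl hyi))
    (hc.degree_kempeGraph_le_one (.inl hyj))
  by_cases hri : (kempeGraph E c γ δ).Reachable x (ys i)
  · exact (hfan.mono hj).edgeColorable_of_not_reachable hc hγ hδ hx hyj fun h => hnot hri h.symm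
  · exact (hfan.mono hi).edgeColorable_of_not_reachable hc hγ hδ hx hyi fun h => hri h.symm

end IsMultifan

end Multifan

section Vizing

variable {V : Type*} [DecidableEq V] {E F : Finset (Sym2 V)} {n : ℕ} {c : Sym2 V → ℕ}
  {x : V} {ys : ℕ → V} {s t γ δ : ℕ}

lemma card_filter_edgeDegree_ne_le_sum {ι : Type*} (hEF : E ⊆ F) (hdeg : ∀ v, edgeDegree F v ≤ n)
    (c : Sym2 V → ℕ) (I : Finset ι) (f : ι → V) :
    #{i ∈ I | edgeDegree F (f i) ≠ n} ≤ ∑ i ∈ I, #(missingColors E c n (f i)) := by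
  rw [card_filter]
  gcongr with i
  split_ifs with hi
  · have := le_card_missingColors_add_edgeDegree E c n (f i)
    have := edgeDegree_mono hEF (f i)
    have := hdeg (f i)
    omega
  · exact Nat.zero_le _

lemma IsMultifan.exists_color_eq_of_maximal (hfan : IsMultifan E c x ys s)
    (hloop : ∀ e ∈ E, ¬e.IsDiag) (h0 : s(x, ys 0) ∉ E)
    (hmax : ∀ ys', ys' 0 = ys 0 → ¬IsMultifan E c x ys' (s + 1)) (ht : t ≤ s)
    (hm : IsMissingAt E c (ys t) γ) (hx : ¬IsMissingAt E c x γ) :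
    ∃ i ∈ Set.Icc 1 s, c s(x, ys i) = γ := by
  simp only [IsMissingAt, not_forall, not_not] at hx
  obtain ⟨e, he, hxe, rfl⟩ := hx
  obtain ⟨z, rfl⟩ := Sym2.mem_iff_exists.1 hxe
  by_cases hz : ∃ i ≤ s, ys i = z
  · obtain ⟨i, his, rfl⟩ := hz
    refine ⟨i, ⟨Nat.pos_of_ne_zero ?_, his⟩, rfl⟩
    rintro rfl
    exact h0 he
  · have hzx : z ≠ x := fun h => hloop _ he (Sym2.mk_isDiag_iff.2 h.symm)
    refine absurd (hfan.extend hzx (fun i hi h => hz ⟨i, hi, h⟩) he ht hm) (hmax _ ?_)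
    exact Function.update_of_ne (by omega) _ _

/-- The colours missing at distinct fan vertices are distinct, and by maximality each of them
colours one of the `s` fan edges. -/
theorem IsMultifan.sum_card_missingColors_le [Fintype V] (hc : IsProperEdgeColoring E n c)
    (hfan : IsMultifan E c x ys s) (hloop : ∀ e ∈ E, ¬e.IsDiag) (h0 : s(x, ys 0) ∉ E)
    (hmax : ∀ ys', ys' 0 = ys 0 → ¬IsMultifan E c x ys' (s + 1))
    (hunc : ¬EdgeColorable (insert s(x, ys 0) E) n) (hδ : δ < n) (hxδ : IsMissingAt E c x δ) :
    ∑ t ∈ range (s + 1), #(missingColors E c n (ys t)) ≤ s := by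
  set M := fun t => missingColors E c n (ys t)
  have hdisj : ((range (s + 1) : Finset ℕ) : Set ℕ).PairwiseDisjoint M := by
    refine fun i hi j hj hij => disjoint_left.2 fun γ hγi hγj => hunc ?_
    obtain ⟨hγn, hyi⟩ := mem_filter.1 hγi
    exact hfan.edgeColorable_of_isMissingAt_of_isMissingAt hc (mem_range_succ_iff.1 hi)
      (mem_range_succ_iff.1 hj) hij (mem_range.1 hγn) hyi (mem_filter.1 hγj).2 hδ hxδ
  have hcov : ∀ t ∈ range (s + 1), M t ⊆ (Icc 1 s).image fun i => c s(x, ys i) := by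
    intro t ht γ hγ
    obtain ⟨hγn, hyt⟩ := mem_filter.1 hγ
    have ht := mem_range_succ_iff.1 ht
    obtain ⟨i, hi, hci⟩ := hfan.exists_color_eq_of_maximal hloop h0 hmax ht hyt fun hxγ =>
      hunc ((hfan.mono ht).edgeColorable_of_isMissingAt hc (mem_range.1 hγn) hxγ hyt)
    exact mem_image.2 ⟨i, mem_Icc.2 hi, hci⟩
  calc ∑ t ∈ range (s + 1), #(M t) = #((range (s + 1)).biUnion M) := (card_biUnion hdisj).symm
    _ ≤ #((Icc 1 s).image fun i => c s(x, ys i)) := card_le_card (biUnion_subset.2 hcov)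
    _ ≤ s := card_image_le.trans (by simp)

lemma IsMultifan.card_filter_edgeDegree_eq_le [Fintype V] (hfan : IsMultifan E c x ys s)
    (hEF : E ⊆ F) (n : ℕ) : #{t ∈ range s | edgeDegree F (ys (t + 1)) = n} ≤
      #{z | z ≠ ys 0 ∧ s(x, z) ∈ F ∧ edgeDegree F z = n} := by
  refine card_le_card_of_injOn (fun t => ys (t + 1)) (fun t ht => ?_) (fun i hi j hj h => ?_)
  · obtain ⟨ht, hdegt⟩ := mem_filter.1 ht
    have ht := mem_range.1 ht
    refine mem_filter.2 ⟨mem_univ _, fun h => ?_, hEF (hfan.edge_mem _ ⟨by omega, by omega⟩),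
      hdegt⟩
    exact absurd (hfan.injOn (show t + 1 ≤ s by omega) (Nat.zero_le s) h) (by omega)
  · have hi := mem_range.1 (mem_filter.1 hi).1
    have hj := mem_range.1 (mem_filter.1 hj).1
    exact Nat.succ_injective (hfan.injOn (show i + 1 ≤ s by omega) (show j + 1 ≤ s by omega) h)

theorem vizing_adjacency [Fintype V] {y : V} (hloop : ∀ e ∈ F, ¬e.IsDiag)
    (hdeg : ∀ v, edgeDegree F v ≤ n) (hxy : s(x, y) ∈ F) (hF : ¬EdgeColorable F n)
    (hcol : EdgeColorable (F.erase s(x, y)) n) :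
    n + 1 ≤ #{z | z ≠ y ∧ s(x, z) ∈ F ∧ edgeDegree F z = n} + edgeDegree F y := by
  obtain ⟨c, hc⟩ := hcol
  set E := F.erase s(x, y)
  have hEF : E ⊆ F := erase_subset _ _
  have hyx : y ≠ x := fun h => hloop _ hxy (Sym2.mk_isDiag_iff.2 h.symm)
  obtain ⟨ys, s, rfl, hfan, hmax⟩ := IsMultifan.exists_maximal E c hyx
  obtain ⟨δ, hδ⟩ : (missingColors E c n x).Nonempty := by
    have := le_card_missingColors_add_edgeDegree E c n x
    have : edgeDegree E x + 1 = edgeDegree F x :=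
      edgeDegree_erase_add_one hxy (Sym2.mem_mk_left _ _)
    have := hdeg x
    exact card_pos.1 (by omega)
  have hsum_le := hfan.sum_card_missingColors_le hc (fun e he => hloop e (hEF he))
    (notMem_erase _ _) hmax (by rwa [insert_erase hxy]) (mem_range.1 (mem_filter.1 hδ).1)
    (mem_filter.1 hδ).2
  rw [sum_range_succ'] at hsum_le
  have hfull := hfan.card_filter_edgeDegree_eq_le hEF n
  have hpart : #{t ∈ range s | edgeDegree F (ys (t + 1)) = n} +
      #{t ∈ range s | edgeDegree F (ys (t + 1)) ≠ n} = s := by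
    simpa using card_filter_add_card_filter_not (s := range s)
      fun t => edgeDegree F (ys (t + 1)) = n
  have := card_filter_edgeDegree_ne_le_sum hEF hdeg c (range s) fun t => ys (t + 1)
  have := le_card_missingColors_add_edgeDegree E c n (ys 0)
  have : edgeDegree E (ys 0) + 1 = edgeDegree F (ys 0) :=
    edgeDegree_erase_add_one hxy (Sym2.mem_mk_right _ _)
  omega

end Vizing

namespace SimpleGraph

variable {V : Type*} [Fintype V] [DecidableEq V] {G : SimpleGraph V} [DecidableRel G.Adj]
  {k n : ℕ}

lemma edgeDegree_edgeFinset (v : V) : edgeDegree G.edgeFinset v = G.degree v := by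
  rw [edgeDegree, ← incidenceFinset_eq_filter, card_incidenceFinset_eq_degree]

namespace IsDegenerate

theorem exists_mem_edgeDegree_le_and_card_le (hG : G.IsDegenerate k) {E : Finset (Sym2 V)}
    (hE : E ⊆ G.edgeFinset) (hne : E.Nonempty) :
    ∃ u y, s(u, y) ∈ E ∧ edgeDegree E y ≤ k ∧ #{z | s(u, z) ∈ E ∧ k < edgeDegree E z} ≤ k := by
  set H : Finset V := {v | k < edgeDegree E v}
  rcases H.eq_empty_or_nonempty with hH | hH
  · have hlow : ∀ v, edgeDegree E v ≤ k := fun v => by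
      by_contra h
      exact (eq_empty_iff_forall_notMem.1 hH) v (mem_filter.2 ⟨mem_univ _, by omega⟩)
    obtain ⟨e, he⟩ := hne
    induction e using Sym2.ind with | h u y =>
    refine ⟨u, y, he, hlow y, ?_⟩
    simp [fun z => (hlow z).not_gt]
  · obtain ⟨u, huH, hu⟩ := hG H hH
    have hadj : ∀ z, s(u, z) ∈ E → G.Adj u z := fun z hz => mem_edgeFinset.1 (hE hz)
    obtain ⟨y, hy, hyH⟩ : ∃ y, s(u, y) ∈ E ∧ y ∉ H := by
      by_contra! h
      have := edgeDegree_le_card_filter E u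
      have : #{z | s(u, z) ∈ E} ≤ #{z ∈ H | G.Adj u z} := card_le_card fun z hz =>
        mem_filter.2 ⟨h z (mem_filter.1 hz).2, hadj z (mem_filter.1 hz).2⟩
      have := (mem_filter.1 huH).2
      omega
    refine ⟨u, y, hy, by simpa [H] using hyH, (card_le_card fun z hz => ?_).trans hu⟩
    obtain ⟨hz, hkz⟩ := (mem_filter.1 hz).2
    exact mem_filter.2 ⟨mem_filter.2 ⟨mem_univ _, hkz⟩, hadj z hz⟩

theorem edgeColorable (hG : G.IsDegenerate k) (hn : 2 * k ≤ n) (hdeg : ∀ v, G.degree v ≤ n)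
    {E : Finset (Sym2 V)} (hE : E ⊆ G.edgeFinset) : EdgeColorable E n := by
  induction E using Finset.strongInduction with | H E ih =>
  by_contra hcol
  have hne : E.Nonempty := nonempty_iff_ne_empty.2 fun h => hcol (h ▸ ⟨0, by simp, by simp⟩)
  obtain ⟨u, y, huy, hy, hu⟩ := hG.exists_mem_edgeDegree_le_and_card_le hE hne
  have hdegE : ∀ v, edgeDegree E v ≤ n := fun v =>
    (edgeDegree_mono hE v).trans (edgeDegree_edgeFinset (G := G) v ▸ hdeg v)
  have hviz := vizing_adjacency (fun e he => G.not_isDiag_of_mem_edgeSet (mem_edgeFinset.1 (hE he)))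
    hdegE huy hcol (ih _ (erase_ssubset huy) ((erase_subset _ _).trans hE))
  have hkn : k < n := by
    have := hdegE u
    have : 0 < edgeDegree E u := card_pos.2 ⟨_, mem_filter.2 ⟨huy, Sym2.mem_mk_left _ _⟩⟩
    omega
  have : #{z | z ≠ y ∧ s(u, z) ∈ E ∧ edgeDegree E z = n} ≤
      #{z | s(u, z) ∈ E ∧ k < edgeDegree E z} := card_le_card fun z hz => by
      obtain ⟨-, hz, hzn⟩ := (mem_filter.1 hz).2
      exact mem_filter.2 ⟨mem_univ _, hz, hzn ▸ hkn⟩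
  omega

end IsDegenerate

end SimpleGraph

lemma chromaticIndex_eq_sInf {V : Type*} [Fintype V] [DecidableEq V] (G : SimpleGraph V)
    [DecidableRel G.Adj] : chromaticIndex G = sInf {n | EdgeColorable G.edgeFinset n} := by
  rw [chromaticIndex]
  refine congrArg sInf (Set.ext fun n => exists_congr fun c => ?_)
  refine ⟨fun ⟨hlt, hne⟩ => ⟨fun e he => hlt e (mem_edgeFinset.1 he), ?_⟩,
    fun hc => ⟨fun e he => hc.lt e (mem_edgeFinset.2 he), ?_⟩⟩
  · exact fun e₁ h₁ e₂ h₂ h v hv₁ hv₂ =>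
      hne e₁ (mem_edgeFinset.1 h₁) e₂ (mem_edgeFinset.1 h₂) h ⟨v, hv₁, hv₂⟩
  · exact fun e₁ h₁ e₂ h₂ h ⟨v, hv₁, hv₂⟩ =>
      hc.ne e₁ (mem_edgeFinset.2 h₁) e₂ (mem_edgeFinset.2 h₂) h v hv₁ hv₂

/-- Vizing: Every graph `G` of treewidth at most `k` and maximum degree
`Δ(G) ≥ 2k` has chromatic index `χ'(G) = Δ(G)`. -/
theorem chromaticIndex_eq_maxDegree_of_treewidth_ge_two_k {V : Type*} [Fintype V]
    [DecidableEq V] (G : SimpleGraph V) [DecidableRel G.Adj] (k : ℕ)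
    (htw : HasTreeDecompositionOfWidth G k) (hΔ : 2 * k ≤ G.maxDegree) :
    chromaticIndex G = G.maxDegree := by
  have hcol : EdgeColorable G.edgeFinset G.maxDegree :=
    htw.isDegenerate.edgeColorable hΔ G.degree_le_maxDegree subset_rfl
  rw [chromaticIndex_eq_sInf]
  refine le_antisymm (Nat.sInf_le hcol) (le_csInf ⟨_, hcol⟩ fun m ⟨c, hc⟩ => ?_)
  exact G.maxDegree_le_of_forall_degree_le m fun v =>
    edgeDegree_edgeFinset (G := G) v ▸ hc.edgeDegree_le v
end

section
/- For positive integers c and r with 4 dividing c(2r + c + 1) and r² ≥ c, there exists a finite simple graph whose degree sequence is (c, c, ..., c, c−1, c−2, ..., 1), where c appears r+1 times (so the graph has c + r vertices). -/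
/-!
Write the target sequence as a staircase `ℓ, ℓ + 1, …, ℓ + s - 1` below a near-regular block of
`k` degrees with sum `S`; initially `ℓ = 1`, `s = c - 1`, `k = r + 1`, `S = (r + 1) c`.
A vertex of minimum degree `ℓ` is realised by joining a new vertex to `ℓ` vertices of the block
whose degrees have been lowered by one (Havel–Hakimi, laying off the minimum). When the block sinks
to the top step of the staircase, that step joins the block. Both moves preserve the integer
`slack`, which is `r² - c` at the start; once the staircase is empty, `0 ≤ slack` says that the
near-regular block fits into a complete graph, and a near-regular sequence of even sum with this
property is graphic.
-/

open SimpleGraph Finset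

theorem Multiset.exists_le_map_eq {α β : Type*} {f : α → β} {s : Multiset α} {ν : Multiset β}
    (h : ν ≤ s.map f) : ∃ t ≤ s, t.map f = ν := by
  induction s using Quotient.inductionOn
  induction ν using Quotient.inductionOn
  obtain ⟨l, hperm, hsub⟩ := Multiset.coe_le.1 h
  obtain ⟨t, ht, rfl⟩ := List.sublist_map_iff.1 hsub
  exact ⟨t, Multiset.coe_le.2 ht.subperm, Multiset.coe_eq_coe.2 hperm⟩

namespace SimpleGraph

variable {V : Type*} (G : SimpleGraph V) (S : Finset V)

def addVertex : SimpleGraph (Option V) where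
  Adj
    | some a, some b => G.Adj a b
    | some a, none | none, some a => a ∈ S
    | none, none => False
  symm := by
    constructor
    rintro (_ | a) (_ | b) h
    exacts [h, h, h, G.adj_symm h]
  loopless := by
    constructor
    rintro (_ | a) h
    exacts [h, G.irrefl h]

variable [DecidableEq V]

instance [DecidableRel G.Adj] : DecidableRel (G.addVertex S).Adj
  | some a, some b => inferInstanceAs (Decidable (G.Adj a b))
  | some a, none | none, some a => inferInstanceAs (Decidable (a ∈ S))
  | none, none => inferInstanceAs (Decidable False)

variable [Fintype V] [DecidableRel G.Adj]

theorem neighborFinset_addVertex_none :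
    (G.addVertex S).neighborFinset none = S.map .some := by
  ext (_ | a) <;> rw [mem_neighborFinset] <;> simp [addVertex]

theorem degree_addVertex_none : (G.addVertex S).degree none = #S := by
  rw [← card_neighborFinset_eq_degree, neighborFinset_addVertex_none, card_map]

theorem degree_addVertex_some (a : V) :
    (G.addVertex S).degree (some a) = G.degree a + if a ∈ S then 1 else 0 := by
  rw [← card_neighborFinset_eq_degree, neighborFinset_eq_filter, card_filter,
    Fintype.sum_option, ← card_neighborFinset_eq_degree, neighborFinset_eq_filter, card_filter,
    add_comm]
  rfl

end SimpleGraph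

namespace DegreeSequence

def IsGraphic (d : Multiset ℕ) : Prop :=
  ∃ (V : Type) (_ : Fintype V) (G : SimpleGraph V) (_ : DecidableRel G.Adj),
    (Finset.univ.val.map fun v => G.degree v) = d

theorem isGraphic_replicate_zero (n : ℕ) : IsGraphic (Multiset.replicate n 0) :=
  ⟨Fin n, inferInstance, ⊥, inferInstance, by simp⟩

theorem IsGraphic.cons_add_map_succ {μ ν : Multiset ℕ} (h : IsGraphic (μ + ν)) :
    IsGraphic (ν.card ::ₘ (μ + ν.map (· + 1))) := by
  classical
  obtain ⟨V, _, G, _, hG⟩ := h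
  obtain ⟨t, ht, rfl⟩ := Multiset.exists_le_map_eq (hG.symm ▸ Multiset.le_add_left ν μ : ν ≤ _)
  set S : Finset V := ⟨t, Multiset.nodup_of_le ht univ.nodup⟩
  refine ⟨Option V, inferInstance, G.addVertex S, inferInstance, ?_⟩
  have hsplit : (univ : Finset V).val = (univ \ S).val + S.val := by
    rw [sdiff_val, tsub_add_cancel_of_le (val_le_iff.2 (subset_univ S))]
  have hμ : (univ \ S).val.map (fun v => G.degree v) = μ := by
    rw [hsplit, Multiset.map_add] at hG
    exact add_right_cancel hG
  have huniv : (univ : Finset (Option V)).val = none ::ₘ univ.val.map some := by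
    rw [univ_option]; rfl
  rw [huniv, Multiset.map_cons, degree_addVertex_none, Multiset.map_map, hsplit,
    Multiset.map_add, ← hμ, Multiset.map_map, Multiset.card_map]
  congr 2
  · exact Multiset.map_congr rfl fun v hv => by
      simp [degree_addVertex_some, (Finset.mem_sdiff.1 hv).2]
  · exact Multiset.map_congr rfl fun v hv => by simp [degree_addVertex_some, S, hv]

/-- For `0 < k`, the `k` entries differ by at most one and sum to `S`. -/
def balanced (k S : ℕ) : Multiset ℕ := (Multiset.range k).map fun i => (S + i) / k

theorem card_balanced (k S : ℕ) : (balanced k S).card = k := by simp [balanced]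

theorem balanced_mul (k c : ℕ) : balanced k (k * c) = Multiset.replicate k c := by
  rw [balanced, Multiset.eq_replicate]
  refine ⟨by simp, fun b hb => ?_⟩
  obtain ⟨i, hi, rfl⟩ := Multiset.mem_map.1 hb
  rw [Multiset.mem_range] at hi
  rw [add_comm, Nat.add_mul_div_left _ _ (by omega), Nat.div_eq_of_lt hi, zero_add]

theorem add_one_add_div_add_one {e j k : ℕ} (he : e ≤ k) (hj : j < k) :
    (e + 1 + j) / (k + 1) = (e + j) / k := by
  by_cases h : e + j < k
  · rw [Nat.div_eq_of_lt (by omega), Nat.div_eq_of_lt h]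
  · rw [Nat.div_eq_of_lt_le (k := 1) (by omega) (by omega),
      Nat.div_eq_of_lt_le (k := 1) (by omega) (by omega)]

theorem balanced_succ (k S : ℕ) :
    balanced (k + 1) S = S / (k + 1) ::ₘ balanced k (S - S / (k + 1)) := by
  rw [balanced, add_comm k 1, Multiset.range_add, Multiset.map_add, Multiset.map_map, add_comm 1 k]
  simp only [show Multiset.range 1 = {0} from rfl, Multiset.map_singleton, add_zero,
    Multiset.singleton_add]
  congr 1
  refine Multiset.map_congr rfl fun j hj => ?_
  rw [Multiset.mem_range] at hj
  obtain ⟨m, e, he, rfl⟩ : ∃ m e, e ≤ k ∧ S = e + (k + 1) * m :=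
    ⟨S / (k + 1), S % (k + 1), Nat.lt_succ_iff.1 (Nat.mod_lt _ k.succ_pos),
      (Nat.mod_add_div _ _).symm⟩
  have hm : (e + (k + 1) * m) / (k + 1) = m := by
    rw [Nat.add_mul_div_left _ _ k.succ_pos, Nat.div_eq_of_lt (by omega), zero_add]
  rw [hm, show e + (k + 1) * m - m + j = e + j + k * m by ring_nf; omega]
  simp only [Function.comp, show e + (k + 1) * m + (1 + j) = e + 1 + j + (k + 1) * m by ring,
    Nat.add_mul_div_left _ _ k.succ_pos, Nat.add_mul_div_left _ _ (show 0 < k by omega),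
    add_one_add_div_add_one he hj]

theorem sum_balanced {k : ℕ} (hk : 0 < k) (S : ℕ) : (balanced k S).sum = S := by
  induction k generalizing S with
  | zero => omega
  | succ k ih =>
    rw [balanced_succ, Multiset.sum_cons]
    rcases k.eq_zero_or_pos with rfl | hk
    · simp [balanced]
    · have : S / (k + 1) ≤ S := Nat.div_le_self S (k + 1)
      rw [ih hk]
      omega

theorem exists_balanced_add {ℓ k : ℕ} (hℓ : ℓ ≤ k) (S : ℕ) :
    ∃ μ ν, ν.card = ℓ ∧ balanced k S = μ + ν ∧ balanced k (S + ℓ) = μ + ν.map (· + 1) := by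
  obtain ⟨m, rfl⟩ := Nat.exists_eq_add_of_le hℓ
  refine ⟨(Multiset.range m).map fun i => (S + (ℓ + i)) / (ℓ + m),
    (Multiset.range ℓ).map fun i => (S + i) / (ℓ + m), by simp, ?_, ?_⟩
  · rw [balanced, Multiset.range_add, Multiset.map_add, Multiset.map_map, add_comm]
    rfl
  · rw [balanced, show Multiset.range (ℓ + m) = Multiset.range (m + ℓ) by rw [add_comm],
      Multiset.range_add, Multiset.map_add, Multiset.map_map, Multiset.map_map]
    congr 1
    · exact Multiset.map_congr rfl fun i _ => by simp [add_assoc]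
    · refine Multiset.map_congr rfl fun i hi => ?_
      rw [Multiset.mem_range] at hi
      simp only [Function.comp]
      rw [show S + ℓ + (m + i) = S + i + (ℓ + m) by ring, Nat.add_div_right _ (by omega)]

theorem cons_balanced {k v S : ℕ} (h₁ : k * v ≤ S) (h₂ : S ≤ k * (v + 1)) :
    v ::ₘ balanced k S = balanced (k + 1) (S + v) := by
  have hv : (S + v) / (k + 1) = v :=
    Nat.div_eq_of_lt_le (by nlinarith) (by nlinarith)
  rw [balanced_succ, hv, Nat.add_sub_cancel]

theorem IsGraphic.cons_add_balanced {ρ : Multiset ℕ} {ℓ k S : ℕ} (hℓ : ℓ ≤ k)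
    (h : IsGraphic (ρ + balanced k S)) : IsGraphic (ℓ ::ₘ (ρ + balanced k (S + ℓ))) := by
  obtain ⟨μ, ν, rfl, hS, hSℓ⟩ := exists_balanced_add hℓ S
  rw [hS, ← add_assoc] at h
  rw [hSℓ, ← add_assoc]
  exact h.cons_add_map_succ

theorem isGraphic_balanced {k S : ℕ} (hS : Even S) (hSk : S + k ≤ k * k) :
    IsGraphic (balanced k S) := by
  induction k generalizing S with
  | zero => exact isGraphic_replicate_zero 0
  | succ k ih =>
    have hm₁ : (k + 1) * (S / (k + 1)) ≤ S := Nat.mul_div_le S (k + 1)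
    have hm₂ : S < (k + 1) * (S / (k + 1) + 1) := Nat.lt_mul_div_succ S k.succ_pos
    rw [balanced_succ]
    generalize S / (k + 1) = m at hm₁ hm₂ ⊢
    have hmk : m ≤ k := by nlinarith
    have h2m : 2 * m ≤ S := by
      rcases Nat.eq_zero_or_pos m with rfl | hm
      · omega
      · nlinarith
    obtain ⟨T, rfl⟩ : ∃ T, S = T + 2 * m := ⟨S - 2 * m, by omega⟩
    have hT : Even T := by simpa [Nat.even_add] using hS
    have hle : T + k ≤ k * k + 1 := by
      rcases hmk.lt_or_eq with hlt | rfl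
      · nlinarith
      · nlinarith
    have hne : T + k ≠ k * k + 1 := by
      obtain ⟨j, rfl⟩ := hT
      obtain ⟨i, hi⟩ := Nat.even_mul_succ_self k
      rw [mul_add, mul_one] at hi
      omega
    have := (ih hT (by omega)).cons_add_balanced (ρ := 0) hmk
    rwa [zero_add, show T + m = T + 2 * m - m by omega] at this

def stair (ℓ s : ℕ) : Multiset ℕ := (Multiset.range s).map (· + ℓ)

theorem stair_zero (ℓ : ℕ) : stair ℓ 0 = 0 := rfl

theorem stair_succ (ℓ s : ℕ) : stair ℓ (s + 1) = (ℓ + s) ::ₘ stair ℓ s := by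
  rw [stair, Multiset.range_succ, Multiset.map_cons, add_comm s ℓ]
  rfl

theorem stair_succ' (ℓ s : ℕ) : stair ℓ (s + 1) = ℓ ::ₘ stair (ℓ + 1) s := by
  rw [stair, add_comm, Multiset.range_add, Multiset.map_add, Multiset.map_map]
  simp only [show Multiset.range 1 = {0} from rfl, Multiset.map_singleton, zero_add,
    Multiset.singleton_add, stair]
  congr 1
  exact Multiset.map_congr rfl fun i _ => by simp only [Function.comp_apply]; ring

theorem card_stair (ℓ s : ℕ) : (stair ℓ s).card = s := by simp [stair]

theorem two_mul_sum_stair (ℓ s : ℕ) : 2 * (stair ℓ s).sum + s = s * (2 * ℓ + s) := by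
  induction s with
  | zero => simp [stair_zero]
  | succ s ih => rw [stair_succ, Multiset.sum_cons]; nlinarith

def slack (ℓ s k S : ℕ) : ℤ :=
  (k + ℓ + s) ^ 2 + ℓ + 1 - 2 * S - ℓ ^ 2 - (ℓ + s) * (ℓ + s + 1) - 2 * k

theorem slack_stair_succ' (ℓ s k S : ℕ) : slack (ℓ + 1) s k S = slack ℓ (s + 1) k (S + ℓ) := by
  unfold slack; push_cast; ring

theorem slack_cons_balanced (ℓ s k S : ℕ) :
    slack ℓ s (k + 1) (S + (ℓ + s)) = slack ℓ (s + 1) k S := by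
  unfold slack; push_cast; ring

theorem add_le_mul_self_of_slack_nonneg {ℓ k S : ℕ} (h : 0 ≤ slack ℓ 0 k S) :
    S + k ≤ k * k := by
  unfold slack at h
  push_cast at h
  nlinarith [sq_nonneg ((k : ℤ) - ℓ)]

theorem le_of_slack_nonneg {ℓ s k S : ℕ} (hS : k * (ℓ + (s + 1)) ≤ S)
    (h : 0 ≤ slack ℓ (s + 1) k S) : ℓ ≤ k := by
  unfold slack at h
  push_cast at h
  nlinarith

-- `hS` says that every block degree exceeds every staircase degree.
theorem isGraphic_stair_add_balanced {s ℓ k S : ℕ} (hk : 0 < k)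
    (hS : 0 < s → k * (ℓ + s) ≤ S) (heven : Even (stair ℓ s + balanced k S).sum)
    (hslack : 0 ≤ slack ℓ s k S) : IsGraphic (stair ℓ s + balanced k S) := by
  induction s using Nat.strong_induction_on generalizing ℓ k S with
  | _ s ih =>
  rcases s with _ | s
  · rw [stair_zero, zero_add] at heven ⊢
    rw [sum_balanced hk] at heven
    exact isGraphic_balanced heven (add_le_mul_self_of_slack_nonneg hslack)
  · have hSℓ : k * (ℓ + (s + 1)) ≤ S := hS s.succ_pos
    have hℓk : ℓ ≤ k := le_of_slack_nonneg hSℓ hslack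
    have hℓS : ℓ ≤ S := by nlinarith
    obtain ⟨T, rfl⟩ : ∃ T, S = T + ℓ := ⟨S - ℓ, by omega⟩
    rw [stair_succ', Multiset.cons_add]
    refine IsGraphic.cons_add_balanced hℓk ?_
    have heven' : Even (stair (ℓ + 1) s + balanced k T).sum := by
      rw [stair_succ', Multiset.cons_add, Multiset.sum_cons, Multiset.sum_add,
        sum_balanced hk] at heven
      rw [Multiset.sum_add, sum_balanced hk]
      obtain ⟨j, hj⟩ := heven
      exact ⟨j - ℓ, by omega⟩
    have hslack' : 0 ≤ slack (ℓ + 1) s k T := by rwa [slack_stair_succ']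
    by_cases habove : 0 < s → k * (ℓ + 1 + s) ≤ T
    · exact ih s (by omega) hk habove heven' hslack'
    -- the block has sunk to the top step `ℓ + 1 + s` of the staircase, which joins it
    obtain ⟨hs, hT⟩ := Classical.not_imp.1 habove
    obtain ⟨s, rfl⟩ : ∃ s', s = s' + 1 := ⟨s - 1, by omega⟩
    have hlow : k * (ℓ + 1 + s) ≤ T := by nlinarith
    have habsorb : stair (ℓ + 1) (s + 1) + balanced k T
        = stair (ℓ + 1) s + balanced (k + 1) (T + (ℓ + 1 + s)) := by
      rw [stair_succ, Multiset.cons_add, ← Multiset.add_cons, cons_balanced hlow (by nlinarith)]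
    rw [habsorb] at heven' ⊢
    refine ih s (by omega) (by omega) (fun _ => by nlinarith) heven' ?_
    rwa [slack_cons_balanced]

end DegreeSequence

open DegreeSequence

theorem exists_graph_with_degree_sequence_general (c r : ℕ) (hc : 0 < c)
    (h4 : 4 ∣ c * (2 * r + c + 1)) (hrc : c ≤ r ^ 2) :
    ∃ (V : Type) (_ : Fintype V) (G : SimpleGraph V) (_ : DecidableRel G.Adj),
      Fintype.card V = c + r ∧
      (Finset.univ.val.map fun v => G.degree v)
        = Multiset.replicate (r + 1) c + (Multiset.range (c - 1)).map (· + 1) := by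
  obtain ⟨d, rfl⟩ : ∃ d, c = d + 1 := ⟨c - 1, by omega⟩
  have htarget : stair 1 d + balanced (r + 1) ((r + 1) * (d + 1))
      = Multiset.replicate (r + 1) (d + 1) + (Multiset.range (d + 1 - 1)).map (· + 1) := by
    rw [balanced_mul, add_comm, Nat.add_sub_cancel]
    rfl
  have heven : Even (stair 1 d + balanced (r + 1) ((r + 1) * (d + 1))).sum := by
    rw [Multiset.sum_add, sum_balanced (by omega)]
    have := two_mul_sum_stair 1 d
    obtain ⟨j, hj⟩ := h4
    exact ⟨j, by nlinarith⟩
  have hslack : 0 ≤ slack 1 d (r + 1) ((r + 1) * (d + 1)) := by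
    unfold slack
    push_cast
    nlinarith
  obtain ⟨V, _, G, _, hG⟩ :=
    isGraphic_stair_add_balanced (by omega) (fun _ => by rw [add_comm 1 d]) heven hslack
  refine ⟨V, _, G, _, ?_, hG.trans htarget⟩
  have := congrArg Multiset.card hG
  simp only [Multiset.card_map, Finset.card_val, Finset.card_univ, Multiset.card_add,
    card_stair, card_balanced] at this
  omega

/-- For positive integers `c` and `r` with `4 ∣ c(2r + c + 1)` and
`r² ≥ c`, there exists a finite simple graph (on `c + r` vertices) whose degree
sequence is `(c, …, c, c−1, c−2, …, 1)` with `c` appearing `r + 1` times. -/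
theorem exists_graph_with_degree_sequence (c r : ℕ) (hc : 0 < c) (hr : 0 < r)
    (h4 : 4 ∣ c * (2 * r + c + 1)) (hrc : c ≤ r ^ 2) :
    ∃ (V : Type) (_ : Fintype V) (G : SimpleGraph V) (_ : DecidableRel G.Adj),
      Fintype.card V = c + r ∧
      (Finset.univ.val.map fun v => G.degree v)
        = Multiset.replicate (r + 1) c + (Multiset.range (c - 1)).map (· + 1) :=
  exists_graph_with_degree_sequence_general c r hc h4 hrc
end

section
/- For positive integers c, r with r² ≥ c and 4 | c(2r+c+1), the sequence d = (c,...,c, c−1, ..., 1) with c occurring r+1 times satisfies the Erdős–Gallai conditions: the sum of entries is even, and for each ℓ, the sum of the first ℓ entries is at most ℓ(ℓ−1) plus the sum over the remaining entries d_i of min(d_i, ℓ). -/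
/-!
The `i`-th entry of the sequence is `min c (c + r - i)`, so both the whole sequence and every
tail of it read backwards are the capped staircase `min 1 c, min 2 c, …`, whose sum has the
closed form `∑_{k ≤ n} min k m = p (2n + 1 - p) / 2` with `p = min m n`.  Twice the total is
therefore `c (2r + c + 1)`, which gives the parity condition, and each Erdős–Gallai inequality
becomes a polynomial inequality in `c, r, ℓ` and `n = c + r - ℓ`.  Splitting according to the
order of `n`, `c` and `ℓ`, the only delicate case is `n ≤ min c ℓ`, where the inequality reads
`c + 1 ≤ r² + (ℓ - n - 1)²`: for `ℓ = n + 1` this needs `c < r²`, which holds because then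
`c + r` is odd while `r² + r` is even.
-/

open Finset

theorem two_mul_sum_range_min_succ_add_sq (m n : ℕ) :
    2 * ∑ k ∈ range n, min (k + 1) m + min m n ^ 2 = min m n * (2 * n + 1) := by
  induction n with
  | zero => simp
  | succ n ih =>
    rw [sum_range_succ]
    rcases le_or_gt m n with hmn | hnm
    · rw [min_eq_left hmn] at ih
      rw [min_eq_right (by omega), min_eq_left (by omega)]
      linarith
    · rw [min_eq_right hnm.le] at ih
      rw [min_eq_left hnm, min_eq_right hnm]
      nlinarith

theorem sum_Ico_min_sub_eq_sum_range (m : ℕ) {ℓ N : ℕ} (h : ℓ ≤ N) :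
    ∑ i ∈ Ico ℓ N, min m (N - i) = ∑ k ∈ range (N - ℓ), min (k + 1) m := by
  rw [sum_Ico_eq_sum_range, ← sum_range_reflect]
  refine sum_congr rfl fun k hk => ?_
  rw [mem_range] at hk
  rw [min_comm, show N - (ℓ + (N - ℓ - 1 - k)) = k + 1 by omega]

theorem add_one_le_sq_add_sq_of_add_eq {c r ℓ n : ℤ} (hsum : ℓ + n = c + r) (hrc : c ≤ r ^ 2) :
    c + 1 ≤ r ^ 2 + (ℓ - n - 1) ^ 2 := by
  rcases eq_or_ne (ℓ - n - 1) 0 with h | h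
  · have hodd : Odd (c + r) := ⟨n, by linarith⟩
    have hne : c ≠ r ^ 2 := by
      rintro rfl
      exact Int.not_even_iff_odd.mpr hodd (by convert Int.even_mul_succ_self r using 1; ring)
    rw [h]
    omega
  · nlinarith [sq_pos_of_ne_zero h]

theorem erdos_gallai_staircase_closed_form {c r ℓ n : ℤ} (hc : 0 ≤ c) (hℓ : 1 ≤ ℓ)
    (hsum : ℓ + n = c + r) (hrc : c ≤ r ^ 2) :
    c * (c + 1 + 2 * r) ≤ 2 * ℓ * (ℓ - 1)
      + (min c n * (2 * n + 1) - min c n ^ 2)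
      + (min (min c ℓ) n * (2 * n + 1) - min (min c ℓ) n ^ 2) := by
  have hsq := add_one_le_sq_add_sq_of_add_eq hsum hrc
  obtain rfl : r = ℓ + n - c := by linarith
  rcases le_total n c with hnc | hcn
  · rcases le_total n ℓ with hnl | hln
    · rw [min_eq_right hnc, min_eq_right (le_min hnc hnl)]
      nlinarith
    · rw [min_eq_right hnc, min_eq_right (hln.trans hnc), min_eq_left hln]
      nlinarith
  · rcases le_total c ℓ with hcl | hlc
    · rw [min_eq_left hcn, min_eq_left hcl, min_eq_left hcn]
      nlinarith
    · rw [min_eq_left hcn, min_eq_right hlc, min_eq_left (hlc.trans hcn)]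
      nlinarith

theorem erdos_gallai_staircase {c r ℓ n : ℕ} (hsum : ℓ + n = c + r) (hrc : c ≤ r ^ 2) :
    ∑ k ∈ range (ℓ + n), min (k + 1) c ≤
      ℓ * (ℓ - 1) + ∑ k ∈ range n, min (k + 1) c + ∑ k ∈ range n, min (k + 1) (min c ℓ) := by
  rcases Nat.eq_zero_or_pos ℓ with rfl | hℓ
  · simp
  have htotal := two_mul_sum_range_min_succ_add_sq c (ℓ + n)
  rw [min_eq_left (by omega)] at htotal
  have hhead := two_mul_sum_range_min_succ_add_sq c n
  have htail := two_mul_sum_range_min_succ_add_sq (min c ℓ) n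
  have hineq := erdos_gallai_staircase_closed_form (c := c) (r := r) (ℓ := ℓ) (n := n)
    (by positivity) (by exact_mod_cast hℓ) (by exact_mod_cast hsum) (by exact_mod_cast hrc)
  generalize ∑ k ∈ range (ℓ + n), min (k + 1) c = total at *
  rw [hsum] at htotal
  generalize ∑ k ∈ range n, min (k + 1) c = head at *
  generalize ∑ k ∈ range n, min (k + 1) (min c ℓ) = tail at *
  zify [hℓ] at htotal hhead htail ⊢
  linarith

theorem erdos_gallai_conditions_for_sequence_general (c r : ℕ)
    (h4 : 4 ∣ c * (2 * r + c + 1)) (hrc : c ≤ r ^ 2) :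
    (Even (∑ i ∈ Finset.range (c + r), min c (c + r - i))) ∧
    ∀ ℓ ≤ c + r,
      ∑ i ∈ Finset.range ℓ, min c (c + r - i)
        ≤ ℓ * (ℓ - 1) + ∑ i ∈ Finset.Ico ℓ (c + r), min (min c (c + r - i)) ℓ := by
  have hfull : ∑ i ∈ range (c + r), min c (c + r - i) = ∑ k ∈ range (c + r), min (k + 1) c := by
    simpa using sum_Ico_min_sub_eq_sum_range c (Nat.zero_le (c + r))
  have htotal : 2 * ∑ i ∈ range (c + r), min c (c + r - i) = c * (2 * r + c + 1) := by
    have h := two_mul_sum_range_min_succ_add_sq c (c + r)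
    rw [min_eq_left (by omega), ← hfull] at h
    linarith
  refine ⟨?_, fun ℓ hℓ => ?_⟩
  · rw [even_iff_two_dvd]
    exact Nat.dvd_of_mul_dvd_mul_left two_pos (htotal ▸ h4)
  · have hsplit := sum_range_add_sum_Ico (fun i => min c (c + r - i)) hℓ
    have hcap : ∑ i ∈ Ico ℓ (c + r), min (min c (c + r - i)) ℓ =
        ∑ i ∈ Ico ℓ (c + r), min (min c ℓ) (c + r - i) :=
      sum_congr rfl fun i _ => min_right_comm _ _ _
    have h := erdos_gallai_staircase (ℓ := ℓ) (n := c + r - ℓ) (by omega) hrc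
    rw [Nat.add_sub_cancel' hℓ, ← hfull, ← sum_Ico_min_sub_eq_sum_range c hℓ,
      ← sum_Ico_min_sub_eq_sum_range (min c ℓ) hℓ] at h
    omega

/-- For positive integers `c`, `r` with `r² ≥ c` and `4 ∣ c(2r+c+1)`, the
nonincreasing sequence `d = (c, …, c, c−1, …, 1)` (with `c` occurring `r+1` times, total
length `c + r`; at 0-indexed position `i` the entry is `min c (c + r − i)`) satisfies the
Erdős–Gallai conditions: the total sum is even, and for each `ℓ ≤ c + r` the sum of the
first `ℓ` entries is at most `ℓ(ℓ−1)` plus the sum over the remaining entries `dᵢ` of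
`min dᵢ ℓ`. -/
theorem erdos_gallai_conditions_for_sequence (c r : ℕ) (hc : 0 < c) (hr : 0 < r)
    (h4 : 4 ∣ c * (2 * r + c + 1)) (hrc : c ≤ r ^ 2) :
    (Even (∑ i ∈ Finset.range (c + r), min c (c + r - i))) ∧
    ∀ ℓ ≤ c + r,
      ∑ i ∈ Finset.range ℓ, min c (c + r - i)
        ≤ ℓ * (ℓ - 1) + ∑ i ∈ Finset.Ico ℓ (c + r), min (min c (c + r - i)) ℓ :=
  erdos_gallai_conditions_for_sequence_general c r h4 hrc
end

section
/- For every integer k₀ ≥ 4 there exists k ∈ {k₀, k₀+1, ..., k₀+8} such that k ≡ ⌊√k⌋ (mod 8) and ⌊√k⌋ < √k (i.e., k is not a perfect square). -/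
/-!
Call `k` good if `n * n < k < (n + 1) * (n + 1)` and `k ≡ n (mod 8)` for `n = ⌊√k⌋`. Inside the
block of non-squares with integer square root `n` the good numbers form a progression of step
`8`, and since `n * (n + 1)` is even, the last one, `n * n + 2 * n - (n * (n + 1) % 8)`, is
followed by the first good number of the next block exactly `9` later. So consecutive good
numbers are at most `9` apart, and every window of nine consecutive integers past the least good
number `11` contains one.
-/

lemma Nat.cast_sqrt_lt_real_sqrt {k : ℕ} (h : Nat.sqrt k * Nat.sqrt k < k) :
    (Nat.sqrt k : ℝ) < √(k : ℝ) :=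
  (Real.lt_sqrt (Nat.cast_nonneg _)).2 (by rw [sq]; exact_mod_cast h)

lemma mod_eight_eq_sqrt_mod_eight_and_cast_sqrt_lt {n k : ℕ} (hlo : n * n < k)
    (hhi : k < (n + 1) * (n + 1)) (hmod : k % 8 = n % 8) :
    k % 8 = Nat.sqrt k % 8 ∧ (Nat.sqrt k : ℝ) < √(k : ℝ) := by
  obtain rfl : n = Nat.sqrt k := Nat.eq_sqrt.2 ⟨hlo.le, hhi⟩
  exact ⟨hmod, Nat.cast_sqrt_lt_real_sqrt hlo⟩

lemma exists_mod_eight_eq_in_window {n k₀ : ℕ} (hn : 3 ≤ n) (hlo : n * n < k₀)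
    (hhi : k₀ ≤ (n + 1) * (n + 1)) :
    ∃ k, k₀ ≤ k ∧ k ≤ k₀ + 8 ∧
      ∃ m, m * m < k ∧ k < (m + 1) * (m + 1) ∧ k % 8 = m % 8 := by
  have hpar : (n * n + n) % 2 = 0 := by
    rw [← Nat.mul_succ]; exact Nat.even_iff.1 (Nat.even_mul_succ_self n)
  have hsq : (n + 1) * (n + 1) = n * n + 2 * n + 1 := by ring
  have hsq' : (n + 1 + 1) * (n + 1 + 1) = n * n + 4 * n + 4 := by ring
  -- If the least `k ≥ k₀` with `k ≡ n` leaves block `n`, then `k₀` lies past its last good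
  -- number, and the first good number of block `n + 1` is at most `9` further.
  by_cases hc : k₀ + (n + 8 - k₀ % 8) % 8 < (n + 1) * (n + 1)
  · exact ⟨_, le_add_right le_rfl, by omega, n, by omega, hc, by omega⟩
  · exact ⟨(n + 1) * (n + 1) + 8 - (n * n + n) % 8, by omega, by omega, n + 1, by omega,
      by omega, by omega⟩

/-- For every integer `k₀ ≥ 4` there exists
`k ∈ {k₀, k₀+1, …, k₀+8}` such that `k ≡ ⌊√k⌋ (mod 8)` and `⌊√k⌋ < √k`
(i.e. `k` is not a perfect square). -/
theorem exists_k_sqrt_mod_eight (k₀ : ℕ) (hk₀ : 4 ≤ k₀) :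
    ∃ k : ℕ, k₀ ≤ k ∧ k ≤ k₀ + 8 ∧
      k % 8 = Nat.sqrt k % 8 ∧ (Nat.sqrt k : ℝ) < Real.sqrt k := by
  rcases le_or_gt k₀ 11 with hsmall | hlarge
  · exact ⟨11, by omega, by omega,
      mod_eight_eq_sqrt_mod_eight_and_cast_sqrt_lt (n := 3) (by norm_num) (by norm_num) rfl⟩
  · set n := Nat.sqrt (k₀ - 1)
    have hn : 3 ≤ n := Nat.le_sqrt.2 (by omega)
    have hlo : n * n ≤ k₀ - 1 := Nat.sqrt_le _
    have hhi : k₀ - 1 < (n + 1) * (n + 1) := Nat.lt_succ_sqrt _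
    obtain ⟨k, hk₀k, hkk₀, m, hmk, hkm, hmod⟩ :=
      exists_mod_eight_eq_in_window (k₀ := k₀) hn (by omega) (by omega)
    exact ⟨k, hk₀k, hkk₀, mod_eight_eq_sqrt_mod_eight_and_cast_sqrt_lt hmk hkm hmod⟩
end

section
/- Every k-degenerate simple graph G with maximum degree Δ ≥ k satisfies 2|E(G)| ≤ Δ|V(G)| − (Δ − k)(Δ − k + 1)/2. -/
open SimpleGraph

/-- A graph is `k`-degenerate if every nonempty (induced) subgraph has a vertex of degree
at most `k` within it. -/
def KDegenerate {V : Type*} (G : SimpleGraph V) (k : ℕ) : Prop :=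
  ∀ A : Finset V, A.Nonempty → ∃ v ∈ A, Set.ncard {u : V | u ∈ A ∧ G.Adj v u} ≤ k

/-!
Peel the vertices off in a degeneracy order. The vertex removed from a set `A` has at most `k`
neighbours inside `A`, hence degree at most `k + |Aᶜ|`, and of course at most `Δ`; so the degrees
of the vertices, in the order they are removed, are bounded by `min Δ (k + i)` for `i = 0, …, n - 1`.
Summing, `2|E| ≤ nΔ - ∑ᵢ (Δ - k - i)⁺ = nΔ - (Δ - k)(Δ - k + 1)/2`, the last step because
`Δ - k ≤ Δ ≤ n`.
-/

open Finset

namespace SimpleGraph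

variable {V : Type*} [Fintype V] {G : SimpleGraph V} [DecidableRel G.Adj]

theorem maxDegree_le_card_verts : G.maxDegree ≤ Fintype.card V :=
  G.maxDegree_le_of_forall_degree_le _ fun v => (G.degree_lt_card_verts v).le

end SimpleGraph

namespace KDegenerate

variable {V : Type*} [Fintype V] [DecidableEq V] {G : SimpleGraph V} [DecidableRel G.Adj] {k : ℕ}

theorem exists_degree_le (hG : KDegenerate G k) {A : Finset V} (hA : A.Nonempty) :
    ∃ v ∈ A, G.degree v ≤ k + #Aᶜ := by
  obtain ⟨v, hv, hk⟩ := hG A hA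
  have hinside : {u : V | u ∈ A ∧ G.Adj v u} = ↑(A.filter (G.Adj v)) := by ext; simp
  rw [hinside, Set.ncard_coe_finset] at hk
  have hsub : G.neighborFinset v ⊆ A.filter (G.Adj v) ∪ Aᶜ := by
    intro u hu
    by_cases huA : u ∈ A
    · exact mem_union_left _ (mem_filter.2 ⟨huA, (G.mem_neighborFinset v u).1 hu⟩)
    · exact mem_union_right _ (mem_compl.2 huA)
  refine ⟨v, hv, ?_⟩
  calc G.degree v = #(G.neighborFinset v) := rfl
    _ ≤ #(A.filter (G.Adj v) ∪ Aᶜ) := card_le_card hsub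
    _ ≤ #(A.filter (G.Adj v)) + #Aᶜ := card_union_le _ _
    _ ≤ k + #Aᶜ := by omega

theorem sum_degree_le (hG : KDegenerate G k) (A : Finset V) :
    ∑ u ∈ A, G.degree u ≤ ∑ i ∈ range #A, min G.maxDegree (k + #Aᶜ + i) := by
  induction A using Finset.strongInduction with
  | H A ih =>
  rcases A.eq_empty_or_nonempty with rfl | hA
  · simp
  obtain ⟨v, hv, hdeg⟩ := exists_degree_le hG hA
  have hcard : #(A.erase v) + 1 = #A := card_erase_add_one hv
  have hcompl : #(A.erase v)ᶜ = #Aᶜ + 1 := by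
    rw [card_compl, card_compl]
    have := A.card_le_univ
    omega
  have hrest := ih (A.erase v) (erase_ssubset hv)
  rw [hcompl] at hrest
  calc ∑ u ∈ A, G.degree u = ∑ u ∈ A.erase v, G.degree u + G.degree v :=
        (sum_erase_add A _ hv).symm
    _ ≤ ∑ i ∈ range #(A.erase v), min G.maxDegree (k + #Aᶜ + (i + 1))
          + min G.maxDegree (k + #Aᶜ + 0) := by
        gcongr
        · simpa only [add_assoc, add_comm 1] using hrest
        · exact le_min (G.degree_le_maxDegree v) hdeg
    _ = ∑ i ∈ range #A, min G.maxDegree (k + #Aᶜ + i) := by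
        rw [← hcard, sum_range_succ']

end KDegenerate

theorem two_mul_sum_range_min_add (Δ k n : ℕ) (h : Δ - k ≤ n) :
    2 * ∑ i ∈ range n, min Δ (k + i) + (Δ - k) * (Δ - k + 1) = 2 * (n * Δ) := by
  induction n generalizing k with
  | zero => simp [show Δ - k = 0 by omega]
  | succ n ih =>
    have hrest := ih (k + 1) (by omega)
    have hshift : ∀ i ∈ range n, min Δ (k + (i + 1)) = min Δ (k + 1 + i) := fun i _ => by
      rw [add_comm i, add_assoc]
    rw [sum_range_succ', add_zero, sum_congr rfl hshift]
    rcases le_or_gt Δ k with hk | hk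
    · rw [Nat.sub_eq_zero_of_le hk, min_eq_left hk]
      rw [Nat.sub_eq_zero_of_le (by omega)] at hrest
      linarith
    · obtain ⟨d, rfl⟩ := Nat.exists_eq_add_of_lt hk
      rw [min_eq_right (by omega)]
      rw [show k + d + 1 - (k + 1) = d by omega] at hrest
      rw [show k + d + 1 - k = d + 1 by omega]
      nlinarith

/-- Every `k`-degenerate simple graph `G` with maximum degree `Δ ≥ k`
satisfies `2|E(G)| ≤ Δ|V(G)| − (Δ − k)(Δ − k + 1)/2`. -/
theorem edge_bound_of_degenerate {V : Type*} [Fintype V] [DecidableEq V]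
    (G : SimpleGraph V) [DecidableRel G.Adj] (k : ℕ)
    (hdeg : KDegenerate G k) (hΔ : k ≤ G.maxDegree) :
    (2 * G.edgeFinset.card : ℚ)
      ≤ G.maxDegree * Fintype.card V
        - (G.maxDegree - k) * (G.maxDegree - k + 1) / 2 := by
  have hdegrees := hdeg.sum_degree_le univ
  rw [compl_univ, card_empty, add_zero, card_univ, G.sum_degrees_eq_twice_card_edges] at hdegrees
  have htriangle := two_mul_sum_range_min_add G.maxDegree k (Fintype.card V)
    (le_trans (Nat.sub_le _ _) G.maxDegree_le_card_verts)
  have hnat : 2 * (2 * #G.edgeFinset) + (G.maxDegree - k) * (G.maxDegree - k + 1)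
      ≤ 2 * (Fintype.card V * G.maxDegree) := by omega
  have hcast : ((G.maxDegree - k : ℕ) : ℚ) = G.maxDegree - k := Nat.cast_sub hΔ
  have hrat := (Nat.cast_le (α := ℚ)).2 hnat
  push_cast [hcast] at hrat
  linarith
end

section
/- Let G_p be the complement of the disjoint union of the stars K_{1,1}, K_{1,2}, ..., K_{1,p}, let n = p(p+1)/2 + p be its number of vertices, Δ = n − 2 its maximum degree, and k = n − 1 − p. Then G_p is k-degenerate and satisfies 2|E(G_p)| = Δn − (Δ − k)(Δ − k + 1)/2. -/
open SimpleGraph Finset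

/-- Vertices of the disjoint union of the stars `K_{1,1}, K_{1,2}, …, K_{1,p}`:
the pair `(i, a)` with `a ≤ i + 1` is the `a`-th vertex of the star `K_{1,i+1}`,
whose centre is `(i, 0)` and whose leaves are `(i, 1), …, (i, i+1)`. -/
def StarVert (p : ℕ) : Type := {q : Fin p × Fin (p + 1) // q.2.1 ≤ q.1.1 + 1}

instance (p : ℕ) : Fintype (StarVert p) := by unfold StarVert; infer_instance

instance (p : ℕ) : DecidableEq (StarVert p) := by unfold StarVert; infer_instance

/-- The disjoint union of the stars `K_{1,1}, …, K_{1,p}`: two vertices are adjacent iff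
they lie in the same star and exactly one of them is the centre. -/
def starsDisjUnion (p : ℕ) : SimpleGraph (StarVert p) :=
  SimpleGraph.fromRel
    (fun u v => u.val.1 = v.val.1 ∧ u.val.2.1 = 0 ∧ v.val.2.1 ≠ 0)

instance (p : ℕ) : DecidableRel (starsDisjUnion p).Adj := fun u v =>
  inferInstanceAs (Decidable (u ≠ v ∧ _ ))

/-- `G_p`: the complement of the disjoint union of the stars `K_{1,1}, …, K_{1,p}`. -/
def Gp (p : ℕ) : SimpleGraph (StarVert p) := (starsDisjUnion p)ᶜ

instance (p : ℕ) : DecidableRel (Gp p).Adj := fun u v =>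
  inferInstanceAs (Decidable (u ≠ v ∧ ¬ (starsDisjUnion p).Adj u v))

/-!
Write `H` for the union of stars and `n` for the number of vertices. In the complement a vertex
has degree `n - 1 - deg_H v`; leaves have `deg_H = 1` and no vertex is isolated in `H`, which gives
`Δ = n - 2`, and summing degrees gives `2|E(G_p)| = n(n - 1) - 2|E(H)| = n(n - 1) - p(p + 1)`.

For degeneracy, any vertex of a set `A` with `|A| ≤ n - p` has at most `|A| - 1 ≤ n - 1 - p`
neighbours in it. A larger `A` misses `m < p` vertices, so by pigeonhole it contains one of the
`m + 1` largest stars, of size `i + 2 ≥ p - m + 1`; the centre of that star is non-adjacent in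
`G_p` to all of it, so it has at most `|A| - (p - m + 1) = n - 1 - p` neighbours in `A`.
-/

lemma Fin.sum_val_add_one_mul_two (p : ℕ) : (∑ i : Fin p, ((i : ℕ) + 1)) * 2 = p * (p + 1) := by
  have h := Finset.sum_range_id_mul_two (p + 1)
  rw [Finset.sum_range_succ'] at h
  rw [Fin.sum_univ_eq_sum_range (· + 1)]
  simpa [mul_comm] using h

namespace SimpleGraph

variable {V : Type*} [DecidableEq V]

lemma ncard_adj_le_card_sub_card (G : SimpleGraph V) {A B : Finset V} {v : V} (hBA : B ⊆ A)
    (hB : ∀ u ∈ B, ¬G.Adj v u) : {u | u ∈ A ∧ G.Adj v u}.ncard ≤ #A - #B := by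
  calc {u | u ∈ A ∧ G.Adj v u}.ncard ≤ (↑(A \ B) : Set V).ncard :=
        Set.ncard_le_ncard (fun u ⟨hu, hadj⟩ => by simpa using ⟨hu, fun hb => hB u hb hadj⟩)
    _ = #A - #B := by rw [Set.ncard_coe_finset, card_sdiff_of_subset hBA]

lemma two_mul_card_edgeFinset_compl_add [Fintype V] (G : SimpleGraph V) [DecidableRel G.Adj] :
    2 * #Gᶜ.edgeFinset + 2 * #G.edgeFinset = Fintype.card V * (Fintype.card V - 1) := by
  have hdeg (v : V) : Gᶜ.degree v + G.degree v = Fintype.card V - 1 := by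
    have := G.degree_lt_card_verts v
    rw [degree_compl]
    omega
  rw [← sum_degrees_eq_twice_card_edges, ← sum_degrees_eq_twice_card_edges, ← sum_add_distrib,
    Finset.sum_congr rfl fun v _ => hdeg v, sum_const, card_univ, smul_eq_mul]

end SimpleGraph

namespace StarVert

variable {p : ℕ}

def mk (i : Fin p) (j : Fin (i + 2)) : StarVert p :=
  ⟨(i, ⟨j, by omega⟩), by simp only; omega⟩

@[simp] lemma mk_fst (i : Fin p) (j : Fin (i + 2)) : (mk i j).val.1 = i := rfl

@[simp] lemma mk_snd (i : Fin p) (j : Fin (i + 2)) : (mk i j).val.2.1 = j := rfl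

lemma ext_iff {u v : StarVert p} : u = v ↔ u.val.1 = v.val.1 ∧ u.val.2.1 = v.val.2.1 := by
  refine ⟨fun h => h ▸ ⟨rfl, rfl⟩, fun ⟨h1, h2⟩ => Subtype.ext (Prod.ext h1 (Fin.ext h2))⟩

lemma mk_injective (i : Fin p) : Function.Injective (mk i) := fun j j' h =>
  Fin.ext (by simpa [ext_iff] using h)

def sigmaEquiv : StarVert p ≃ Σ i : Fin p, Fin (i + 2) where
  toFun v := ⟨v.val.1, ⟨v.val.2, by have := v.property; omega⟩⟩
  invFun x := mk x.1 x.2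
  left_inv _ := rfl
  right_inv _ := rfl

lemma sum_eq_sum_mk {M : Type*} [AddCommMonoid M] (f : StarVert p → M) :
    ∑ v, f v = ∑ i, ∑ j, f (mk i j) := by
  rw [← Fintype.sum_sigma (fun x : Σ i : Fin p, Fin (i + 2) => f (mk x.1 x.2))]
  exact Fintype.sum_equiv sigmaEquiv _ _ fun _ => rfl

lemma card_eq : Fintype.card (StarVert p) = p * (p + 1) / 2 + p := by
  have := Fin.sum_val_add_one_mul_two p
  rw [Fintype.card_congr sigmaEquiv, Fintype.card_sigma]
  simp only [Fintype.card_fin]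
  show ∑ i : Fin p, ((i : ℕ) + 1 + 1) = _
  rw [sum_add_distrib, sum_const, card_univ, Fintype.card_fin, smul_eq_mul, mul_one]
  omega

def star (i : Fin p) : Finset (StarVert p) := univ.image (mk i)

lemma mem_star {i : Fin p} {u : StarVert p} : u ∈ star i ↔ u.val.1 = i := by
  refine ⟨fun hu => ?_, fun hu => ?_⟩
  · obtain ⟨j, -, rfl⟩ := mem_image.mp hu
    rfl
  · exact mem_image.mpr ⟨⟨u.val.2, by have := u.property; omega⟩, mem_univ _, by
      simp [ext_iff, hu]⟩

lemma card_star (i : Fin p) : #(star i) = i + 2 := by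
  rw [star, card_image_of_injective _ (mk_injective i), card_univ, Fintype.card_fin]

end StarVert

open StarVert

lemma starsDisjUnion_adj {p : ℕ} {u v : StarVert p} :
    (starsDisjUnion p).Adj u v ↔ u.val.1 = v.val.1 ∧
      (u.val.2.1 = 0 ∧ v.val.2.1 ≠ 0 ∨ v.val.2.1 = 0 ∧ u.val.2.1 ≠ 0) := by
  simp only [starsDisjUnion, fromRel_adj, ne_eq, ext_iff, Fin.ext_iff]
  constructor
  · rintro ⟨-, h | h⟩ <;> omega
  · rintro ⟨h, h' | h'⟩ <;> omega

lemma neighborFinset_mk_zero {p : ℕ} (i : Fin p) :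
    (starsDisjUnion p).neighborFinset (mk i 0) = (star i).erase (mk i 0) := by
  ext u
  simp only [mem_neighborFinset, mem_erase, ne_eq, mem_star, starsDisjUnion_adj, ext_iff, mk_fst,
    mk_snd, Fin.val_zero, Fin.ext_iff, true_and, not_true_eq_false, and_false, or_false]
  omega

lemma neighborFinset_mk_succ {p : ℕ} (i : Fin p) (j : Fin (i + 1)) :
    (starsDisjUnion p).neighborFinset (mk i j.succ) = {mk i 0} := by
  ext u
  simp only [mem_neighborFinset, mem_singleton, starsDisjUnion_adj, ext_iff, mk_fst,
    mk_snd, Fin.val_zero, Fin.val_succ, Fin.ext_iff]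
  omega

lemma degree_mk_zero {p : ℕ} (i : Fin p) : (starsDisjUnion p).degree (mk i 0) = i + 1 := by
  rw [← card_neighborFinset_eq_degree, neighborFinset_mk_zero,
    card_erase_of_mem (mem_star.mpr (mk_fst i 0)), card_star]
  rfl

lemma degree_mk_succ {p : ℕ} (i : Fin p) (j : Fin (i + 1)) :
    (starsDisjUnion p).degree (mk i j.succ) = 1 := by
  rw [← card_neighborFinset_eq_degree, neighborFinset_mk_succ, card_singleton]

lemma sum_degrees_starsDisjUnion (p : ℕ) :
    ∑ v, (starsDisjUnion p).degree v = p * (p + 1) := by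
  rw [sum_eq_sum_mk, ← Fin.sum_val_add_one_mul_two, sum_mul]
  refine Finset.sum_congr rfl fun i _ => ?_
  rw [Fin.sum_univ_succ, degree_mk_zero]
  simp only [degree_mk_succ, sum_const, card_univ, Fintype.card_fin, smul_eq_mul, mul_one]
  ring

lemma degree_starsDisjUnion_pos {p : ℕ} (v : StarVert p) : 0 < (starsDisjUnion p).degree v := by
  rw [degree_pos_iff_exists_adj]
  by_cases hv : v.val.2.1 = 0
  · exact ⟨mk v.val.1 1, starsDisjUnion_adj.mpr ⟨rfl, Or.inl ⟨hv, by simp⟩⟩⟩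
  · exact ⟨mk v.val.1 0, starsDisjUnion_adj.mpr ⟨rfl, Or.inr ⟨rfl, hv⟩⟩⟩

lemma degree_Gp {p : ℕ} (v : StarVert p) :
    (Gp p).degree v = Fintype.card (StarVert p) - 1 - (starsDisjUnion p).degree v := by
  unfold Gp
  convert (starsDisjUnion p).degree_compl (v := v)

lemma maxDegree_Gp {p : ℕ} (hp : 0 < p) :
    (Gp p).maxDegree = Fintype.card (StarVert p) - 2 := by
  refine le_antisymm (maxDegree_le_of_forall_degree_le _ _ fun v => ?_) ?_
  · have := degree_starsDisjUnion_pos v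
    rw [degree_Gp]
    omega
  · calc Fintype.card (StarVert p) - 2 = (Gp p).degree (mk ⟨0, hp⟩ (Fin.succ 0)) := by
          rw [degree_Gp, degree_mk_succ]; rfl
      _ ≤ (Gp p).maxDegree := degree_le_maxDegree _ _

lemma exists_star_subset {p : ℕ} (A : Finset (StarVert p)) (hA : #Aᶜ < p) :
    ∃ i : Fin p, p - 1 - #Aᶜ ≤ i ∧ star i ⊆ A := by
  have hcard : #(Aᶜ.image (·.val.1)) < #(Ici (⟨p - 1 - #Aᶜ, by omega⟩ : Fin p)) := by
    rw [Fin.card_Ici]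
    exact card_image_le.trans_lt (by simp only; omega)
  obtain ⟨i, hi, hiA⟩ := exists_mem_notMem_of_card_lt_card hcard
  refine ⟨i, by simpa [Fin.le_def] using mem_Ici.mp hi, fun u hu => ?_⟩
  by_contra huA
  exact hiA (mem_image.mpr ⟨u, mem_compl.mpr huA, mem_star.mp hu⟩)

lemma kDegenerate_Gp (p : ℕ) : KDegenerate (Gp p) (Fintype.card (StarVert p) - 1 - p) := by
  intro A hA
  have hAc := card_add_card_compl A
  by_cases hsmall : #A ≤ Fintype.card (StarVert p) - p
  · obtain ⟨v, hv⟩ := hA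
    refine ⟨v, hv, ((Gp p).ncard_adj_le_card_sub_card (singleton_subset_iff.mpr hv) ?_).trans ?_⟩
    · simp
    · rw [card_singleton]
      omega
  · obtain ⟨i, hi, hstar⟩ := exists_star_subset A (by omega)
    refine ⟨mk i 0, hstar (mem_star.mpr rfl),
      ((Gp p).ncard_adj_le_card_sub_card hstar fun u hu hadj => hadj.2 ?_).trans ?_⟩
    · rw [← mem_neighborFinset, neighborFinset_mk_zero]
      exact mem_erase.mpr ⟨hadj.1.symm, hu⟩
    · rw [card_star]
      omega

lemma two_mul_card_edgeFinset_Gp (p : ℕ) :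
    2 * #(Gp p).edgeFinset + p * (p + 1) =
      Fintype.card (StarVert p) * (Fintype.card (StarVert p) - 1) := by
  have := (starsDisjUnion p).two_mul_card_edgeFinset_compl_add
  rw [← (starsDisjUnion p).sum_degrees_eq_twice_card_edges, sum_degrees_starsDisjUnion] at this
  unfold Gp
  convert this

/-- Let `G_p` be the complement of the disjoint union of the stars
`K_{1,1}, …, K_{1,p}`, let `n = p(p+1)/2 + p` be its number of vertices, `Δ = n − 2`
its maximum degree and `k = n − 1 − p`. Then `G_p` is `k`-degenerate and satisfies
`2|E(G_p)| = Δn − (Δ − k)(Δ − k + 1)/2`. -/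
theorem Gp_degenerate_and_tight (p : ℕ) (hp : 0 < p)
    (n Δ k : ℕ) (hn : n = p * (p + 1) / 2 + p) (hΔ : Δ = n - 2) (hk : k = n - 1 - p) :
    Fintype.card (StarVert p) = n ∧
    (Gp p).maxDegree = Δ ∧
    KDegenerate (Gp p) k ∧
    (2 * (Gp p).edgeFinset.card : ℚ) = Δ * n - (Δ - k : ℕ) * ((Δ - k : ℕ) + 1) / 2 := by
  have hcard : Fintype.card (StarVert p) = n := card_eq.trans hn.symm
  have hpp : 2 ≤ p * (p + 1) := Nat.mul_le_mul hp (Nat.succ_le_succ hp)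
  have hn2 : 2 * n = p * (p + 1) + 2 * p := by
    have := (Nat.even_mul_succ_self p).two_dvd
    omega
  refine ⟨hcard, by rw [maxDegree_Gp hp, hcard, hΔ], by rw [hk, ← hcard]; exact kDegenerate_Gp p, ?_⟩
  have hE := two_mul_card_edgeFinset_Gp p
  rw [hcard] at hE
  rw [show Δ - k = p - 1 by omega, hΔ]
  have hEQ := congrArg (Nat.cast : ℕ → ℚ) hE
  push_cast [Nat.cast_sub (show 1 ≤ n by omega)] at hEQ
  have hnQ : (2 * n : ℚ) = p * (p + 1) + 2 * p := by exact_mod_cast hn2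
  push_cast [Nat.cast_sub hp, Nat.cast_sub (show 2 ≤ n by omega)]
  linear_combination hEQ + (1 / 2 : ℚ) * hnQ
end
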